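/- arXiv:0705.3051 — 6 statements merged into one kernel-verified Lean document; each statement's English description precedes it below -/
import Mathlib

section
/- Let η > 0, let E ⊆ ℝ be a set such that |s - t| ≥ 4η for all distinct s, t ∈ E, and let F ⊆ ℝ be a set such that every point of [0,∞) is within distance η of some point of F. Then for each a ∈ [0,∞), there exists b ∈ [0, 6η) such that a + b ∈ F and a + b has distance at least η from every point of E. -/
lemma aux0 (η a x : ℝ) (hη : 0 < η) (E F : Set ℝ)
    (hF : ∀ y : ℝ, 0 ≤ y → ∃ c ∈ F, |y - c| < η)
    (ha : 0 ≤ a) (hx1 : a + η ≤ x) (hx2 : x ≤ a + 5 * η)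
    (hxE : ∀ t ∈ E, 2 * η ≤ |x - t|) :
    ∃ b : ℝ, 0 ≤ b ∧ b < 6 * η ∧ a + b ∈ F ∧ ∀ t ∈ E, η ≤ |a + b - t| := by
  obtain ⟨c, hcF, hc⟩ := hF x (by linarith)
  rw [abs_sub_lt_iff] at hc
  refine ⟨c - a, by linarith [hc.1, hc.2], by linarith [hc.1, hc.2], by simpa using hcF, ?_⟩
  intro t ht
  have h1 := hxE t ht
  have h2 : |x - t| ≤ |x - c| + |c - t| := abs_sub_le x c t
  have h3 : |x - c| < η := abs_sub_lt_iff.mpr hc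
  have : a + (c - a) - t = c - t := by ring
  rw [this]
  linarith

/-- **Lemma (EF-lemma).** Let `η > 0`, let `E ⊆ ℝ` with `|s - t| ≥ 4η` for all distinct
`s, t ∈ E`, and let `F ⊆ ℝ` such that every point of `[0,∞)` is within distance `η` of
some point of `F`.  Then for each `a ∈ [0,∞)` there exists `b ∈ [0, 6η)` such that
`a + b ∈ F` and `a + b` has distance at least `η` from every point of `E`. -/
theorem stmt0 (η : ℝ) (hη : 0 < η) (E F : Set ℝ)
    (hE : ∀ s ∈ E, ∀ t ∈ E, s ≠ t → 4 * η ≤ |s - t|)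
    (hF : ∀ x : ℝ, 0 ≤ x → ∃ c ∈ F, |x - c| < η) :
    ∀ a : ℝ, 0 ≤ a → ∃ b : ℝ, 0 ≤ b ∧ b < 6 * η ∧ a + b ∈ F ∧ ∀ t ∈ E, η ≤ |a + b - t| := by
  intro a ha
  by_cases h : ∃ t ∈ E, a + η < t ∧ t < a + 5 * η
  · obtain ⟨t, ht, ht1, ht2⟩ := h
    by_cases h3 : t ≤ a + 3 * η
    · refine aux0 η a (t + 2 * η) hη E F hF ha (by linarith) (by linarith) ?_
      intro s hs
      by_cases hst : s = t
      · subst hst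
        rw [le_abs]; left; linarith
      · rcases le_abs.mp (hE s hs t ht hst) with h4 | h4 <;> rw [le_abs]
        · right; linarith
        · left; linarith
    · refine aux0 η a (t - 2 * η) hη E F hF ha (by linarith) (by linarith) ?_
      intro s hs
      by_cases hst : s = t
      · subst hst
        rw [le_abs]; right; linarith
      · rcases le_abs.mp (hE s hs t ht hst) with h4 | h4 <;> rw [le_abs]
        · right; linarith
        · left; linarith
  · push_neg at h
    refine aux0 η a (a + 3 * η) hη E F hF ha (by linarith) (by linarith) ?_
    intro s hs
    rcases lt_or_ge (a + η) s with h4 | h4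
    · have h5 := h s hs h4
      rw [le_abs]; right; linarith
    · rw [le_abs]; left; linarith
end

section
/- Let (s_ν) and (t_ν) be sequences of nonnegative real numbers with t_ν → ∞. Then there exists a Lipschitz continuous function χ : ℝ → ℝ such that: (i) χ > 2 everywhere, and χ is nondecreasing with Lipschitz constant at most 1/2; (ii) χ(t) → ∞ as t → ∞; (iii) for all s, t ∈ ℝ with |s - t| < 1, χ(s) < 2·χ(t); and (iv) for all ν ∈ ℕ and all t ∈ ℝ with t_ν - 1 < t < s_ν + t_ν + 1, one has χ(t)/4 < χ(t_ν) < 4·χ(t). -/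
open Finset Filter

/-- The breakpoint sequence. -/
noncomputable def auxA (s t : ℕ → ℝ) : ℕ → ℝ
  | 0 => 0
  | k+1 => max (auxA s t k + 1)
      (sSup {x | ∃ ν, t ν ≤ auxA s t k ∧ x = s ν + t ν + 1})

noncomputable def auxClamp (c x : ℝ) : ℝ := min (max (x - c) 0) 1

noncomputable def auxS (s t : ℕ → ℝ) (m : ℕ) (x : ℝ) : ℝ :=
  ∑ k ∈ Finset.range m, auxClamp (auxA s t k) x

noncomputable def auxU (s t : ℕ → ℝ) (x : ℝ) : ℝ := auxS s t ⌈x⌉₊ x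

lemma auxA_succ_ge (s t : ℕ → ℝ) (k : ℕ) : auxA s t k + 1 ≤ auxA s t (k+1) :=
  le_max_left _ _

lemma auxA_ge (s t : ℕ → ℝ) (k : ℕ) : (k : ℝ) ≤ auxA s t k := by
  induction k with
  | zero => simp [auxA]
  | succ k ih =>
    have := auxA_succ_ge s t k
    push_cast
    linarith

lemma auxA_mono (s t : ℕ → ℝ) : Monotone (auxA s t) :=
  monotone_nat_of_le_succ fun k => by linarith [auxA_succ_ge s t k]

lemma auxA_gap (s t : ℕ → ℝ) {j k : ℕ} (h : j < k) :
    auxA s t j + 1 ≤ auxA s t k := by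
  calc auxA s t j + 1 ≤ auxA s t (j+1) := auxA_succ_ge s t j
    _ ≤ auxA s t k := auxA_mono s t h

lemma auxA_key (s t : ℕ → ℝ) (ht : Filter.Tendsto t Filter.atTop Filter.atTop)
    (k : ℕ) {ν : ℕ} (hν : t ν ≤ auxA s t k) :
    s ν + t ν + 1 ≤ auxA s t (k+1) := by
  have hbdd : BddAbove {x | ∃ ν, t ν ≤ auxA s t k ∧ x = s ν + t ν + 1} := by
    obtain ⟨N, hN⟩ := (Filter.eventually_atTop).mp (ht.eventually_gt_atTop (auxA s t k))
    refine BddAbove.mono ?_ (((Set.finite_Iio N).image (fun ν => s ν + t ν + 1)).bddAbove)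
    rintro x ⟨μ, hμ, rfl⟩
    refine ⟨μ, ?_, rfl⟩
    by_contra hc
    exact absurd hμ (not_le.mpr (hN μ (le_of_not_gt hc)))
  have : s ν + t ν + 1 ≤ sSup {x | ∃ ν, t ν ≤ auxA s t k ∧ x = s ν + t ν + 1} :=
    le_csSup hbdd ⟨ν, hν, rfl⟩
  calc s ν + t ν + 1 ≤ _ := this
    _ ≤ auxA s t (k+1) := le_max_right _ _

lemma auxClamp_nonneg (c x : ℝ) : 0 ≤ auxClamp c x := by
  unfold auxClamp
  exact le_min (le_max_right _ _) zero_le_one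

lemma auxClamp_mono (c : ℝ) {x y : ℝ} (h : x ≤ y) : auxClamp c x ≤ auxClamp c y := by
  unfold auxClamp
  exact min_le_min (max_le_max (by linarith) le_rfl) le_rfl

lemma auxClamp_eq_zero {c x : ℝ} (h : x ≤ c) : auxClamp c x = 0 := by
  unfold auxClamp
  rw [max_eq_right (by linarith), min_eq_left zero_le_one]

lemma auxClamp_eq_one {c x : ℝ} (h : c + 1 ≤ x) : auxClamp c x = 1 := by
  unfold auxClamp
  rw [max_eq_left (by linarith), min_eq_right (by linarith)]

lemma min_add_auxClamp (c x : ℝ) : min x c + auxClamp c x = min x (c+1) := by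
  unfold auxClamp
  rcases le_total x c with h | h
  · rw [min_eq_left h, max_eq_right (by linarith), min_eq_left zero_le_one,
      min_eq_left (by linarith)]; ring
  · rcases le_total x (c+1) with h2 | h2
    · rw [min_eq_right h, max_eq_left (by linarith), min_eq_left (by linarith),
        min_eq_left h2]; ring
    · rw [min_eq_right h, max_eq_left (by linarith), min_eq_right (by linarith),
        min_eq_right h2]

lemma min_cap_mono {x y c c' : ℝ} (hxy : x ≤ y) (hc : c ≤ c') :
    min y c - min x c ≤ min y c' - min x c' := by
  rcases le_total x c with h1 | h1 <;> rcases le_total y c with h2 | h2 <;>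
    rcases le_total x c' with h3 | h3 <;> rcases le_total y c' with h4 | h4 <;>
    simp [min_eq_left, min_eq_right, h1, h2, h3, h4] <;> linarith

lemma min_cap_lip {x y c : ℝ} (hxy : x ≤ y) : min y c - min x c ≤ y - x := by
  rcases le_total x c with h1 | h1 <;> rcases le_total y c with h2 | h2 <;>
    simp [min_eq_left, min_eq_right, h1, h2] <;> linarith

lemma auxS_mono (s t : ℕ → ℝ) (m : ℕ) {x y : ℝ} (h : x ≤ y) :
    auxS s t m x ≤ auxS s t m y :=
  Finset.sum_le_sum fun k _ => auxClamp_mono _ h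

lemma auxS_nonneg (s t : ℕ → ℝ) (m : ℕ) (x : ℝ) : 0 ≤ auxS s t m x :=
  Finset.sum_nonneg fun k _ => auxClamp_nonneg _ _

lemma auxS_lip (s t : ℕ → ℝ) (m : ℕ) {x y : ℝ} (h : x ≤ y) :
    auxS s t m y - auxS s t m x ≤ min y (auxA s t m) - min x (auxA s t m) := by
  induction m with
  | zero =>
    simp only [auxS, Finset.range_zero, Finset.sum_empty, sub_self]
    have : min x (auxA s t 0) ≤ min y (auxA s t 0) :=
      min_le_min h le_rfl
    linarith
  | succ m ih =>
    have hrw : ∀ z : ℝ, auxS s t (m+1) z = auxS s t m z + auxClamp (auxA s t m) z := by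
      intro z; simp [auxS, Finset.sum_range_succ]
    rw [hrw, hrw]
    have h1 := min_add_auxClamp (auxA s t m) x
    have h2 := min_add_auxClamp (auxA s t m) y
    have h3 : min y (auxA s t m + 1) - min x (auxA s t m + 1) ≤
        min y (auxA s t (m+1)) - min x (auxA s t (m+1)) :=
      min_cap_mono h (auxA_succ_ge s t m)
    linarith

lemma auxS_stab (s t : ℕ → ℝ) {m n : ℕ} (hmn : m ≤ n) {x : ℝ} (hx : x ≤ (m:ℝ)) :
    auxS s t n x = auxS s t m x := by
  unfold auxS
  rw [← Finset.sum_subset (Finset.range_subset_range.mpr hmn)]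
  intro k hk hk'
  simp only [Finset.mem_range] at hk hk'
  have : (m:ℝ) ≤ auxA s t k := le_trans (by exact_mod_cast Nat.le_of_not_lt hk') (auxA_ge s t k)
  exact auxClamp_eq_zero (le_trans hx this)

lemma auxS_val (s t : ℕ → ℝ) {k m : ℕ} (hkm : k < m) :
    auxS s t m (auxA s t k) = k := by
  unfold auxS
  have : ∀ j ∈ Finset.range m, auxClamp (auxA s t j) (auxA s t k) =
      if j < k then (1:ℝ) else 0 := by
    intro j _
    split_ifs with hj
    · exact auxClamp_eq_one (auxA_gap s t hj)
    · exact auxClamp_eq_zero (auxA_mono s t (Nat.le_of_not_lt hj))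
  rw [Finset.sum_congr rfl this, Finset.sum_boole]
  have hfil : (Finset.range m).filter (fun j => j < k) = Finset.range k := by
    ext j; simp only [Finset.mem_filter, Finset.mem_range]; omega
  simp [hfil]

lemma auxU_eq (s t : ℕ → ℝ) {m : ℕ} {x : ℝ} (hx : x ≤ (m:ℝ)) :
    auxU s t x = auxS s t m x := by
  unfold auxU
  exact (auxS_stab s t (Nat.ceil_le.mpr hx) (Nat.le_ceil x)).symm

lemma auxU_nonneg (s t : ℕ → ℝ) (x : ℝ) : 0 ≤ auxU s t x := auxS_nonneg _ _ _ _

lemma auxU_mono (s t : ℕ → ℝ) {x y : ℝ} (h : x ≤ y) : auxU s t x ≤ auxU s t y := by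
  set m := max ⌈x⌉₊ ⌈y⌉₊ with hm
  have hxm : x ≤ (m:ℝ) := le_trans (Nat.le_ceil x) (by exact_mod_cast le_max_left _ _)
  have hym : y ≤ (m:ℝ) := le_trans (Nat.le_ceil y) (by exact_mod_cast le_max_right _ _)
  rw [auxU_eq s t hxm, auxU_eq s t hym]
  exact auxS_mono s t m h

lemma auxU_lip (s t : ℕ → ℝ) {x y : ℝ} (h : x ≤ y) : auxU s t y - auxU s t x ≤ y - x := by
  set m := max ⌈x⌉₊ ⌈y⌉₊ with hm
  have hxm : x ≤ (m:ℝ) := le_trans (Nat.le_ceil x) (by exact_mod_cast le_max_left _ _)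
  have hym : y ≤ (m:ℝ) := le_trans (Nat.le_ceil y) (by exact_mod_cast le_max_right _ _)
  rw [auxU_eq s t hxm, auxU_eq s t hym]
  exact le_trans (auxS_lip s t m h) (min_cap_lip h)

lemma auxU_val (s t : ℕ → ℝ) (k : ℕ) : auxU s t (auxA s t k) = k := by
  set m := max (k+1) ⌈auxA s t k⌉₊ with hm
  have hxm : auxA s t k ≤ (m:ℝ) :=
    le_trans (Nat.le_ceil _) (by exact_mod_cast le_max_right _ _)
  rw [auxU_eq s t hxm]
  exact auxS_val s t (lt_of_lt_of_le (Nat.lt_succ_self k) (le_max_left _ _))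

/-- **Lemma.** Given sequences `(s ν)` and `(t ν)` of nonnegative reals with `t ν → ∞`,
there is a Lipschitz continuous `χ : ℝ → ℝ` with:
(i) `χ > 2` everywhere and `χ` is nondecreasing with Lipschitz constant at most `1/2`
    (i.e. `0 ≤ χ b - χ a ≤ (b - a)/2` for `a ≤ b`);
(ii) `χ x → ∞` as `x → ∞`;
(iii) `|a - b| < 1` implies `χ a < 2 * χ b`;
(iv) for all `ν` and all `x` with `t ν - 1 < x < s ν + t ν + 1`,
     `χ x / 4 < χ (t ν) < 4 * χ x`. -/
theorem stmt1 (s t : ℕ → ℝ) (hs : ∀ ν, 0 ≤ s ν) (ht0 : ∀ ν, 0 ≤ t ν)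
    (ht : Filter.Tendsto t Filter.atTop Filter.atTop) :
    ∃ χ : ℝ → ℝ,
      (∀ x : ℝ, 2 < χ x) ∧
      (∀ a b : ℝ, a ≤ b → χ a ≤ χ b ∧ χ b - χ a ≤ (b - a) / 2) ∧
      Filter.Tendsto χ Filter.atTop Filter.atTop ∧
      (∀ a b : ℝ, |a - b| < 1 → χ a < 2 * χ b) ∧
      (∀ (ν : ℕ) (x : ℝ), t ν - 1 < x → x < s ν + t ν + 1 →
        χ x / 4 < χ (t ν) ∧ χ (t ν) < 4 * χ x) := by
  classical
  set u : ℝ → ℝ := auxU s t with hu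
  refine ⟨fun x => 3 + u x / 2, ?_, ?_, ?_, ?_, ?_⟩
  · intro x
    have := auxU_nonneg s t x
    simp only [hu] at *
    linarith
  · intro a b hab
    have h1 := auxU_mono s t hab
    have h2 := auxU_lip s t hab
    constructor <;> simp only [hu] at * <;> linarith
  · rw [Filter.tendsto_atTop]
    intro b
    rw [Filter.eventually_atTop]
    refine ⟨auxA s t ⌈2*b⌉₊, fun x hx => ?_⟩
    have h1 : u (auxA s t ⌈2*b⌉₊) ≤ u x := auxU_mono s t hx
    have h2 : u (auxA s t ⌈2*b⌉₊) = (⌈2*b⌉₊ : ℝ) := auxU_val s t _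
    have h3 : (2*b : ℝ) ≤ (⌈2*b⌉₊ : ℝ) := Nat.le_ceil _
    linarith
  · intro a b hab
    rw [abs_lt] at hab
    have hb0 : 0 ≤ u b := auxU_nonneg s t b
    rcases le_total a b with h | h
    · have := auxU_mono s t h
      linarith
    · have := auxU_lip s t h
      linarith
  · intro ν x hx1 hx2
    -- find k with auxA k ≤ t ν < auxA (k+1)
    have hex : ∃ k, t ν < auxA s t (k+1) := by
      refine ⟨⌈t ν⌉₊, lt_of_le_of_lt (Nat.le_ceil _) ?_⟩
      have h1 : ((⌈t ν⌉₊ : ℕ) : ℝ) + 1 ≤ auxA s t (⌈t ν⌉₊ + 1) := by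
        have := auxA_ge s t (⌈t ν⌉₊ + 1)
        push_cast at this ⊢
        linarith
      linarith
    set k := Nat.find hex with hk
    have hk2 : t ν < auxA s t (k+1) := Nat.find_spec hex
    have hk1 : auxA s t k ≤ t ν := by
      rcases Nat.eq_zero_or_pos k with h0 | h0
      · rw [h0]; simpa [auxA] using ht0 ν
      · have := Nat.find_min hex (m := k - 1) (by omega)
        push_neg at this
        have hidx : k - 1 + 1 = k := by omega
        rwa [hidx] at this
    -- key bounds
    have hkey : s ν + t ν + 1 ≤ auxA s t (k+2) :=
      auxA_key s t ht (k+1) (le_of_lt hk2)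
    have hux : u x ≤ (k:ℝ) + 2 := by
      have h1 : u x ≤ u (auxA s t (k+2)) :=
        auxU_mono s t (le_trans (le_of_lt hx2) hkey)
      have h2 : u (auxA s t (k+2)) = ((k+2 : ℕ) : ℝ) := auxU_val s t _
      push_cast at h2
      linarith
    have hut : (k:ℝ) ≤ u (t ν) := by
      have h1 : u (auxA s t k) ≤ u (t ν) := auxU_mono s t hk1
      have h2 : u (auxA s t k) = (k:ℝ) := auxU_val s t _
      linarith
    have hux0 : 0 ≤ u x := auxU_nonneg s t x
    have hut0 : 0 ≤ u (t ν) := auxU_nonneg s t (t ν)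
    constructor
    · -- χ x / 4 < χ (t ν) using u x ≤ u (t ν) + 2
      have : u x ≤ u (t ν) + 2 := by linarith
      simp only
      linarith
    · -- χ (t ν) < 4 * χ x
      rcases le_total x (t ν) with h | h
      · have hlip := auxU_lip s t h
        simp only
        linarith
      · have := auxU_mono s t h
        simp only
        linarith
end

section
/- Let κ : ℝ → [0,∞) be a C^∞ function with support contained in (-1,1), ∫ κ = 1, and ∫ u·κ(u) du = 0. For d ≥ 1 define M_d : ℝ^d → ℝ by M_d(t) = ∫_{ℝ^d} max_{1≤j≤d}(t_j + u_j) · ∏_j κ(u_j) du. Then for every t ∈ ℝ^d, max_j t_j ≤ M_d(t) ≤ max_j t_j + 1. -/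
/-!
`∏ⱼ κ(uⱼ) du` is a probability measure on `ℝ^d` under which every coordinate `uⱼ` has mean zero
and takes values in `(-1, 1)`. Integrating `uⱼ + tⱼ ≤ maxₖ (tₖ + uₖ)` gives the lower bound, and
integrating `maxₖ (tₖ + uₖ) ≤ maxₖ tₖ + 1` on the support of the density gives the upper bound.
-/

open MeasureTheory

/-- Demailly's regularized maximum: `regMax κ d t = ∫_{ℝ^d} max_j (t_j + u_j) ∏_j κ(u_j) du`. -/
noncomputable def regMax (κ : ℝ → ℝ) (d : ℕ) (t : Fin d → ℝ) : ℝ :=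
  ∫ u : Fin d → ℝ, (⨆ j, (t j + u j)) * ∏ j, κ (u j)

open Set Function

theorem continuous_iSup_add {ι : Type*} [Fintype ι] [Nonempty ι] (t : ι → ℝ) :
    Continuous fun u : ι → ℝ => ⨆ j, (t j + u j) := by
  simp only [← Finset.sup'_univ_eq_ciSup]
  exact Continuous.finset_sup'_apply Finset.univ_nonempty fun j _ =>
    continuous_const.add (continuous_apply j)

theorem iSup_add_le_iSup_add {ι : Type*} [Finite ι] [Nonempty ι] {t u : ι → ℝ} {c : ℝ}
    (hu : ∀ j, u j ≤ c) : (⨆ j, (t j + u j)) ≤ (⨆ j, t j) + c :=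
  ciSup_le fun j => add_le_add (le_ciSup (Finite.bddAbove_range t) j) (hu j)

section ProductDensity

variable {ι : Type*} [Fintype ι] {κ : ℝ → ℝ} {s : Set ℝ}

theorem support_prod_comp_subset_pi (hsupp : support κ ⊆ s) :
    support (fun u : ι → ℝ => ∏ j, κ (u j)) ⊆ univ.pi fun _ => s := fun _ hu j _ =>
  hsupp (Finset.prod_ne_zero_iff.mp hu j (Finset.mem_univ j))

theorem integrable_mul_prod_comp (hs : IsCompact s) (hsupp : support κ ⊆ s)
    (hκ : Integrable κ) {g : (ι → ℝ) → ℝ} (hg : Continuous g) :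
    Integrable fun u => g u * ∏ j, κ (u j) := by
  rw [← integrableOn_iff_integrable_of_support_subset
    ((support_mul_subset_right _ _).trans (support_prod_comp_subset_pi hsupp))]
  exact (Integrable.fintype_prod (f := fun _ => κ) fun _ => hκ).integrableOn.continuousOn_mul
    hg.continuousOn (isCompact_univ_pi fun _ => hs)

theorem integral_prod_comp_eq_one (hκ1 : ∫ x, κ x = 1) : ∫ u : ι → ℝ, ∏ j, κ (u j) = 1 := by
  rw [integral_fintype_prod_volume_eq_pow, hκ1, one_pow]

theorem integral_coord_mul_prod_comp_eq_zero (hκm : ∫ x, x * κ x = 0) (j : ι) :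
    ∫ u : ι → ℝ, u j * ∏ k, κ (u k) = 0 := by
  classical
  let f : ι → ℝ → ℝ := update (fun _ => κ) j fun x => x * κ x
  have hf : ∀ u : ι → ℝ, u j * ∏ k, κ (u k) = ∏ k, f k (u k) := fun u => by
    rw [← Finset.mul_prod_erase _ _ (Finset.mem_univ j),
      ← Finset.mul_prod_erase _ _ (Finset.mem_univ j), ← mul_assoc]
    simp only [f, update_self]
    congr 1
    exact Finset.prod_congr rfl fun k hk => by rw [update_of_ne (Finset.ne_of_mem_erase hk)]
  simp_rw [hf, integral_fintype_prod_volume_eq_prod]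
  exact Finset.prod_eq_zero (Finset.mem_univ j) (by simpa [f] using hκm)

theorem integral_add_coord_mul_prod_comp (hs : IsCompact s) (hsupp : support κ ⊆ s)
    (hκ1 : ∫ x, κ x = 1) (hκm : ∫ x, x * κ x = 0) (c : ℝ) (j : ι) :
    ∫ u : ι → ℝ, (c + u j) * ∏ k, κ (u k) = c := by
  have hκ : Integrable κ := .of_integral_ne_zero (by rw [hκ1]; exact one_ne_zero)
  simp_rw [add_mul]
  rw [integral_add (integrable_mul_prod_comp hs hsupp hκ continuous_const)
      (integrable_mul_prod_comp hs hsupp hκ (continuous_apply j)),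
    integral_const_mul, integral_prod_comp_eq_one hκ1,
    integral_coord_mul_prod_comp_eq_zero hκm, mul_one, add_zero]

theorem iSup_le_integral_iSup_add_mul_prod_comp [Nonempty ι] (hκ0 : ∀ x, 0 ≤ κ x)
    (hs : IsCompact s) (hsupp : support κ ⊆ s) (hκ1 : ∫ x, κ x = 1) (hκm : ∫ x, x * κ x = 0)
    (t : ι → ℝ) :
    (⨆ j, t j) ≤ ∫ u : ι → ℝ, (⨆ j, (t j + u j)) * ∏ j, κ (u j) := by
  have hκ : Integrable κ := .of_integral_ne_zero (by rw [hκ1]; exact one_ne_zero)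
  refine ciSup_le fun j => ?_
  rw [← integral_add_coord_mul_prod_comp hs hsupp hκ1 hκm (t j) j]
  refine integral_mono (integrable_mul_prod_comp hs hsupp hκ (continuous_const.add
    (continuous_apply j))) (integrable_mul_prod_comp hs hsupp hκ (continuous_iSup_add t))
    fun u => mul_le_mul_of_nonneg_right ?_ (Finset.prod_nonneg fun k _ => hκ0 _)
  exact le_ciSup (Finite.bddAbove_range fun k => t k + u k) j

theorem integral_iSup_add_mul_prod_comp_le [Nonempty ι] (hκ0 : ∀ x, 0 ≤ κ x)
    (hs : IsCompact s) (hsupp : support κ ⊆ s) {c : ℝ} (hsc : ∀ x ∈ s, x ≤ c) (hκ1 : ∫ x, κ x = 1)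
    (t : ι → ℝ) : ∫ u : ι → ℝ, (⨆ j, (t j + u j)) * ∏ j, κ (u j) ≤ (⨆ j, t j) + c := by
  have hκ : Integrable κ := .of_integral_ne_zero (by rw [hκ1]; exact one_ne_zero)
  have hbound (u : ι → ℝ) :
      (⨆ j, (t j + u j)) * ∏ j, κ (u j) ≤ ((⨆ j, t j) + c) * ∏ j, κ (u j) := by
    by_cases hu : u ∈ support fun u : ι → ℝ => ∏ j, κ (u j)
    · exact mul_le_mul_of_nonneg_right (iSup_add_le_iSup_add fun j =>
        hsc _ (support_prod_comp_subset_pi hsupp hu j (mem_univ j)))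
        (Finset.prod_nonneg fun k _ => hκ0 _)
    · rw [notMem_support.mp hu, mul_zero, mul_zero]
  calc ∫ u : ι → ℝ, (⨆ j, (t j + u j)) * ∏ j, κ (u j)
      ≤ ∫ u : ι → ℝ, ((⨆ j, t j) + c) * ∏ j, κ (u j) :=
        integral_mono (integrable_mul_prod_comp hs hsupp hκ (continuous_iSup_add t))
          (integrable_mul_prod_comp hs hsupp hκ continuous_const) hbound
    _ = (⨆ j, t j) + c := by rw [integral_const_mul, integral_prod_comp_eq_one hκ1, mul_one]

end ProductDensity

theorem stmt2_general (κ : ℝ → ℝ) (hκ0 : ∀ u, 0 ≤ κ u)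
    (hκsupp : Function.support κ ⊆ Set.Ioo (-1 : ℝ) 1)
    (hκ1 : ∫ u : ℝ, κ u = 1) (hκm : ∫ u : ℝ, u * κ u = 0)
    (d : ℕ) (hd : 0 < d) :
    ∀ t : Fin d → ℝ, (⨆ j, t j) ≤ regMax κ d t ∧ regMax κ d t ≤ (⨆ j, t j) + 1 := by
  intro t
  have : Nonempty (Fin d) := ⟨⟨0, hd⟩⟩
  have hsupp : support κ ⊆ Icc (-1) 1 := hκsupp.trans Ioo_subset_Icc_self
  exact ⟨iSup_le_integral_iSup_add_mul_prod_comp hκ0 isCompact_Icc hsupp hκ1 hκm t,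
    integral_iSup_add_mul_prod_comp_le hκ0 isCompact_Icc hsupp (fun _ hx => hx.2) hκ1 t⟩

/-- Part (e) of the regularized-maximum lemma: `max t ≤ M_d(t) ≤ max t + 1`. -/
theorem stmt2 (κ : ℝ → ℝ) (hκs : ContDiff ℝ (⊤ : ℕ∞) κ) (hκ0 : ∀ u, 0 ≤ κ u)
    (hκsupp : Function.support κ ⊆ Set.Ioo (-1 : ℝ) 1)
    (hκ1 : ∫ u : ℝ, κ u = 1) (hκm : ∫ u : ℝ, u * κ u = 0)
    (d : ℕ) (hd : 0 < d) :
    ∀ t : Fin d → ℝ, (⨆ j, t j) ≤ regMax κ d t ∧ regMax κ d t ≤ (⨆ j, t j) + 1 :=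
  stmt2_general κ hκ0 hκsupp hκ1 hκm d hd
end

section
/- Let (X, d) be a connected length metric space (or a connected Riemannian manifold) such that for some point p ∈ X the function x ↦ d(x, p) is proper (i.e. closed balls are compact), and suppose every point of the closed ball of radius R about p has a neighborhood B(a; 3r) contained in a simply connected open set for some fixed r > 0. Then for each R > 0, the set K(p, R) of homotopy classes in π₁(X, p) represented by piecewise smooth loops at p of length < R is finite. -/
/-- The length of a path in a metric space, as its total variation. -/
noncomputable def pathLength {X : Type*} [MetricSpace X] {x y : X} (γ : Path x y) : ENNReal :=
  eVariationOn γ.extend (Set.Icc 0 1)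

/-!
A loop at `p` of length `< R` stays in the ball `B(p, R)`. Using its variation function, cut
it into a fixed number `N` of arcs of length `≤ δ = 3r/4`, where `N` depends only on `R` and `r`,
and move each subdivision point to a nearby point of a fixed finite `δ`-net of the closed ball.
Each arc, the short paths joining its endpoints to their net points, and a short path between
consecutive net points all lie in one ball `B(a, 3r)`, hence in a simply connected set. So the
loop is homotopic to the chain of fixed short paths through its `N + 1` net points, and its
homotopy class is determined by this tuple of net points.
-/

open Set Fin Metric unitInterval

namespace Path

variable {X : Type*} [TopologicalSpace X]

theorem Homotopic.of_range_subset {x y : X} {s : Set X} [SimplyConnectedSpace s]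
    {p q : Path x y} (hp : range p ⊆ s) (hq : range q ⊆ s) : p.Homotopic q := by
  have hx : x ∈ s := p.source ▸ hp (mem_range_self 0)
  have hy : y ∈ s := p.target ▸ hp (mem_range_self 1)
  let restrict (γ : Path x y) (hγ : range γ ⊆ s) : Path (⟨x, hx⟩ : s) ⟨y, hy⟩ :=
    { toFun := fun t => ⟨γ t, hγ (mem_range_self t)⟩
      continuous_toFun := γ.continuous.subtype_mk _
      source' := Subtype.ext γ.source
      target' := Subtype.ext γ.target }
  exact (SimplyConnectedSpace.paths_homotopic (restrict p hp) (restrict q hq)).map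
    ⟨Subtype.val, continuous_subtype_val⟩

theorem Homotopic.trans_conj_trans_conj {x₀ x₁ x₂ y₀ y₁ y₂ : X} (c₀ : Path x₀ y₀)
    (c₁ : Path x₁ y₁) (c₂ : Path x₂ y₂) (A : Path y₀ y₁) (B : Path y₁ y₂) :
    ((c₀.trans (A.trans c₁.symm)).trans (c₁.trans (B.trans c₂.symm))).Homotopic
      (c₀.trans ((A.trans B).trans c₂.symm)) := by
  simp only [← Homotopic.Quotient.eq, Homotopic.Quotient.mk_trans, Homotopic.Quotient.mk_symm,
    Homotopic.Quotient.trans_assoc]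
  rw [← Homotopic.Quotient.trans_assoc (Homotopic.Quotient.symm _), Homotopic.Quotient.symm_trans,
    Homotopic.Quotient.refl_trans]

theorem Homotopic.concat_of_conj {n : ℕ} {x q : Fin (n + 1) → X}
    {F : ∀ k : Fin n, Path (x k.castSucc) (x k.succ)}
    {G : ∀ k : Fin n, Path (q k.castSucc) (q k.succ)} (c : ∀ k, Path (x k) (q k))
    (h : ∀ k, (F k).Homotopic ((c k.castSucc).trans ((G k).trans (c k.succ).symm))) :
    (concat x F).Homotopic ((c 0).trans ((concat q G).trans (c (last n)).symm)) := by
  induction n with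
  | zero => simp [← Homotopic.Quotient.eq]
  | succ n ih =>
    rw [concat_succ, concat_succ]
    exact ((ih (fun k => c k.castSucc) fun k => h k.castSucc).hcomp (h (last n))).trans
      (trans_conj_trans_conj _ _ _ _ _)

theorem Homotopic.of_subpath_zero_one {a b : X} (γ : Path a b) (Φ : ∀ x y : X, Path x y)
    {s u : I} (hs : s = 0) (hu : u = 1) (h : (γ.subpath s u).Homotopic (Φ (γ s) (γ u))) :
    γ.Homotopic (Φ a b) := by
  subst hs hu
  have hΦ : ∀ {x x' y y' : X} (hx : x' = x) (hy : y' = y), (Φ x y).cast hx hy = Φ x' y' := by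
    intro x x' y y' hx hy
    subst hx hy
    rfl
  rw [subpath_zero_one] at h
  rw [← hΦ γ.source.symm γ.target.symm]
  exact h.pathCast γ.source.symm γ.target.symm

noncomputable def chainThrough (cpath : ∀ x y : X, Path x y) {n : ℕ} (q : Fin (n + 1) → X)
    (x y : X) : Path x y :=
  (cpath x (q 0)).trans
    ((concat q fun k => cpath (q k.castSucc) (q k.succ)).trans (cpath y (q (last n))).symm)

end Path

theorem LocallyBoundedVariationOn.continuousOn_variationOnFromTo {α E : Type*} [LinearOrder α]
    [TopologicalSpace α] [OrderTopology α] [PseudoMetricSpace E] {f : α → E} {s : Set α}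
    (hf : LocallyBoundedVariationOn f s) (hc : ContinuousOn f s) {a : α} (ha : a ∈ s) :
    ContinuousOn (variationOnFromTo f s a) s := by
  intro b hb
  have hl := variationOnFromTo.tendsto_left ha hb hf
    (((hc b hb).mono inter_subset_left).tendsto)
  have hr := variationOnFromTo.tendsto_right ha hb hf
    (((hc b hb).mono inter_subset_left).tendsto)
  rw [dist_self, sub_zero] at hl
  rw [dist_self, add_zero] at hr
  refine (continuousWithinAt_insert_self.2 (ContinuousWithinAt.union hl hr)).mono fun x hx => ?_
  rcases lt_trichotomy x b with h | rfl | h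
  · exact Or.inr (Or.inl ⟨hx, h⟩)
  · exact Or.inl rfl
  · exact Or.inr (Or.inr ⟨hx, h⟩)

theorem StrictMonoOn.exists_subdivision_eq_increments {w : ℝ → ℝ} {a b : ℝ} (hab : a ≤ b)
    (hw : StrictMonoOn w (Icc a b)) (hc : ContinuousOn w (Icc a b)) {n : ℕ} (hn : 0 < n) :
    ∃ t : Fin (n + 1) → ℝ, Monotone t ∧ t 0 = a ∧ t (last n) = b ∧ (∀ k, t k ∈ Icc a b) ∧
      ∀ k : Fin n, w (t k.succ) - w (t k.castSucc) = (w b - w a) / n := by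
  have ha : a ∈ Icc a b := left_mem_Icc.2 hab
  have hb : b ∈ Icc a b := right_mem_Icc.2 hab
  have hstep : 0 ≤ (w b - w a) / n :=
    div_nonneg (sub_nonneg.2 (hw.monotoneOn ha hb hab)) n.cast_nonneg
  have hn' : (n : ℝ) ≠ 0 := by positivity
  have hy : ∀ k : Fin (n + 1), w a + k * ((w b - w a) / n) ∈ Icc (w a) (w b) := fun k => by
    refine ⟨le_add_of_nonneg_right (by positivity), ?_⟩
    calc w a + k * ((w b - w a) / n) ≤ w a + n * ((w b - w a) / n) := by
          gcongr; exact_mod_cast k.is_le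
      _ = w b := by field_simp; ring
  choose t ht hwt using fun k => intermediate_value_Icc hab hc (hy k)
  have ht_mono : Monotone t := fun i j hij =>
    (hw.le_iff_le (ht i) (ht j)).1 <| by
      rw [hwt, hwt]; gcongr; exact_mod_cast hij
  refine ⟨t, ht_mono, hw.injOn (ht 0) ha ?_, hw.injOn (ht _) hb ?_, ht, fun k => ?_⟩
  · simp [hwt]
  · rw [hwt, val_last]; field_simp; ring
  · rw [hwt, hwt, val_succ, val_castSucc]; push_cast; ring

theorem BoundedVariationOn.exists_monotone_subdivision_eVariationOn_le {E : Type*}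
    [PseudoMetricSpace E] {f : ℝ → E} {a b : ℝ} (hab : a ≤ b)
    (hf : BoundedVariationOn f (Icc a b)) (hc : ContinuousOn f (Icc a b)) {δ : ℝ} {n : ℕ}
    (hn : 0 < n) (hδ : (eVariationOn f (Icc a b)).toReal + (b - a) ≤ n * δ) :
    ∃ t : Fin (n + 1) → ℝ, Monotone t ∧ t 0 = a ∧ t (last n) = b ∧
      ∀ k : Fin n, eVariationOn f (Icc (t k.castSucc) (t k.succ)) ≤ ENNReal.ofReal δ := by
  have ha : a ∈ Icc a b := left_mem_Icc.2 hab
  have hbv := hf.locallyBoundedVariationOn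
  have hvar : ∀ {x y}, x ∈ Icc a b → y ∈ Icc a b → x ≤ y → eVariationOn f (Icc x y) =
      ENNReal.ofReal (variationOnFromTo f (Icc a b) a y - variationOnFromTo f (Icc a b) a x) := by
    intro x y hx hy hxy
    rw [← variationOnFromTo.add hbv ha hx hy, add_sub_cancel_left,
      variationOnFromTo.eq_of_le _ _ hxy, ENNReal.ofReal_toReal, inter_eq_right.2]
    · exact ordConnected_Icc.out hx hy
    · exact ne_top_of_le_ne_top hf (eVariationOn.mono _ inter_subset_left)
  -- adding the identity makes the variation function strictly monotone, hence invertible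
  obtain ⟨t, ht_mono, ht0, htn, ht, hinc⟩ := StrictMonoOn.exists_subdivision_eq_increments
      (w := fun x => variationOnFromTo f (Icc a b) a x + x) hab
      (fun x hx y hy hxy => add_lt_add_of_le_of_lt
        (variationOnFromTo.monotoneOn hbv ha hx hy hxy.le) hxy)
      ((hbv.continuousOn_variationOnFromTo hc ha).add continuousOn_id) hn
  refine ⟨t, ht_mono, ht0, htn, fun k => ?_⟩
  rw [hvar (ht _) (ht _) (ht_mono k.castSucc_le_succ)]
  refine ENNReal.ofReal_le_ofReal ?_
  have hk := hinc k
  simp only [variationOnFromTo.self, variationOnFromTo.eq_of_le _ _ hab, inter_self] at hk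
  have hstep : ((eVariationOn f (Icc a b)).toReal + b - (0 + a)) / n ≤ δ := by
    rw [div_le_iff₀ (by positivity)]; linarith
  linarith [ht_mono k.castSucc_le_succ]

namespace Path

variable {X : Type*} [MetricSpace X]

theorem range_subset_ball_of_pathLength_lt {x y : X} (γ : Path x y) {L : ℝ}
    (h : pathLength γ < ENNReal.ofReal L) : range γ ⊆ ball x L := by
  rintro _ ⟨u, rfl⟩
  have := (eVariationOn.edist_le γ.extend (left_mem_Icc.2 zero_le_one) u.2).trans_lt h
  rw [γ.extend_zero, γ.extend_extends'] at this
  rw [mem_ball, dist_comm]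
  exact edist_lt_ofReal.1 this

theorem exists_subdivision_range_subpath_subset_closedBall {x y : X} (γ : Path x y) {δ : ℝ}
    {n : ℕ} (hn : 0 < n) (hγ : pathLength γ ≠ ⊤) (hδ : (pathLength γ).toReal + 1 ≤ n * δ) :
    ∃ t : Fin (n + 1) → I, t 0 = 0 ∧ t (last n) = 1 ∧ ∀ k : Fin n,
      range (γ.subpath (t k.castSucc) (t k.succ)) ⊆ closedBall (γ (t k.castSucc)) δ := by
  obtain ⟨t, ht_mono, ht0, htn, ht⟩ :=
    BoundedVariationOn.exists_monotone_subdivision_eVariationOn_le zero_le_one hγ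
      γ.continuous_extend.continuousOn hn (by simpa [pathLength] using hδ)
  have hI : ∀ k, t k ∈ I := fun k => ⟨ht0 ▸ ht_mono (zero_le k), htn ▸ ht_mono (le_last k)⟩
  have hδ0 : 0 ≤ δ := by
    have : (0 : ℝ) ≤ n * δ := by linarith [ENNReal.toReal_nonneg (a := pathLength γ)]
    exact nonneg_of_mul_nonneg_right this (by positivity)
  refine ⟨fun k => ⟨t k, hI k⟩, Subtype.ext ht0, Subtype.ext htn, fun k => ?_⟩
  rw [range_subpath_of_le _ _ _ (Subtype.mk_le_mk.2 (ht_mono k.castSucc_le_succ))]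
  rintro _ ⟨u, hu, rfl⟩
  have := (eVariationOn.edist_le γ.extend (left_mem_Icc.2 (ht_mono k.castSucc_le_succ)) hu).trans
    (ht k)
  rw [show γ.extend (t k.castSucc) = γ ⟨_, hI _⟩ from γ.extend_extends' ⟨_, hI _⟩,
    γ.extend_extends'] at this
  rw [mem_closedBall, dist_comm]
  exact (edist_le_ofReal hδ0).1 this

theorem homotopic_chainThrough {a b : X} (γ : Path a b) {n : ℕ} {t : Fin (n + 1) → I}
    (ht0 : t 0 = 0) (htn : t (last n) = 1) {δ : ℝ}
    (hγ : ∀ k : Fin n,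
      range (γ.subpath (t k.castSucc) (t k.succ)) ⊆ closedBall (γ (t k.castSucc)) δ)
    {q : Fin (n + 1) → X} (hq : ∀ k, dist (γ (t k)) (q k) < δ) {cpath : ∀ x y : X, Path x y}
    (hcpath : ∀ x y, range (cpath x y) ⊆ ball x (dist x y + δ))
    (hU : ∀ k : Fin n, ∃ U : Set X, SimplyConnectedSpace U ∧ ball (q k.castSucc) (4 * δ) ⊆ U) :
    γ.Homotopic (chainThrough cpath q a b) := by
  refine Homotopic.of_subpath_zero_one γ (chainThrough cpath q) ht0 htn
    ((Homotopic.concat_subpath γ t).symm.trans ?_)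
  refine Homotopic.concat_of_conj (fun k => cpath (γ (t k)) (q k)) fun k => ?_
  obtain ⟨U, hU, hsub⟩ := hU k
  have hx : dist (γ (t k.succ)) (γ (t k.castSucc)) ≤ δ := hγ k ⟨1, Path.target _⟩
  have h₀ := hq k.castSucc
  have h₁ := hq k.succ
  have hq₀ := dist_comm (q k.castSucc) (γ (t k.castSucc))
  have hδ : 0 < δ := dist_nonneg.trans_lt h₀
  refine Homotopic.of_range_subset (s := U) ((hγ k).trans ?_) ?_
  · exact (closedBall_subset_ball' (by linarith)).trans hsub
  rw [trans_range, trans_range, symm_range]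
  refine union_subset ?_ (union_subset ?_ ?_) <;> refine (hcpath _ _).trans (.trans ?_ hsub) <;>
    refine ball_subset_ball' ?_
  · linarith
  · linarith [dist_triangle4 (q k.castSucc) (γ (t k.castSucc)) (γ (t k.succ)) (q k.succ),
      dist_comm (γ (t k.castSucc)) (γ (t k.succ)), dist_self (q k.castSucc)]
  · linarith [dist_triangle (γ (t k.succ)) (γ (t k.castSucc)) (q k.castSucc)]

end Path

theorem stmt10_general {X : Type*} [MetricSpace X] (p : X)
    (hproper : ∀ R : ℝ, IsCompact (Metric.closedBall p R))
    (hlength : ∀ x y : X, ∀ ε : ℝ, 0 < ε →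
      ∃ γ : Path x y, pathLength γ < ENNReal.ofReal (dist x y + ε))
    (hsc : ∀ R : ℝ, ∃ r : ℝ, 0 < r ∧ ∀ a ∈ Metric.closedBall p R,
      ∃ s : Set X, IsOpen s ∧ SimplyConnectedSpace s ∧ Metric.ball a (3 * r) ⊆ s) :
    ∀ R : ℝ, 0 < R →
      Set.Finite {c : Path.Homotopic.Quotient p p |
        ∃ γ : Path p p, pathLength γ < ENNReal.ofReal R ∧ (⟦γ⟧ : Path.Homotopic.Quotient p p) = c} := by
  intro R hR
  obtain ⟨r, hr, hr_sc⟩ := hsc R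
  set δ := 3 * r / 4 with hδ_def
  have hδ : 0 < δ := by positivity
  choose cpath hcpath using fun x y : X => hlength x y δ hδ
  obtain ⟨T, hTR, hTfin, hT⟩ := finite_cover_balls_of_compact (hproper R) hδ
  obtain ⟨N, hN⟩ := exists_nat_gt ((R + 1) / δ)
  have hN0 : 0 < N := by exact_mod_cast (by positivity : 0 < (R + 1) / δ).trans hN
  refine ((Set.Finite.pi fun _ : Fin (N + 1) => hTfin).image
    fun q => (⟦Path.chainThrough cpath q p p⟧ : Path.Homotopic.Quotient p p)).subset ?_
  rintro _ ⟨γ, hγR, rfl⟩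
  obtain ⟨t, ht0, htN, ht⟩ := γ.exists_subdivision_range_subpath_subset_closedBall (δ := δ) hN0
    hγR.ne_top (by linarith [ENNReal.toReal_le_of_le_ofReal hR.le hγR.le, (div_lt_iff₀ hδ).1 hN])
  choose q hqT hq using fun k => by
    simpa using hT (ball_subset_closedBall (γ.range_subset_ball_of_pathLength_lt hγR ⟨t k, rfl⟩))
  refine ⟨q, fun k _ => hqT k, Quotient.sound (γ.homotopic_chainThrough ht0 htN ht hq
    (fun x y => (cpath x y).range_subset_ball_of_pathLength_lt (hcpath x y)) fun k => ?_).symm⟩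
  obtain ⟨U, -, hU, hball⟩ := hr_sc (q k.castSucc) (hTR (hqT _))
  exact ⟨U, hU, by rwa [hδ_def, show 4 * (3 * r / 4) = 3 * r by ring]⟩

/-- **Lemma.** Let `(X, d)` be a connected length metric space (e.g. a connected
Riemannian manifold) such that for some point `p` the distance function `d(·, p)` is
proper (closed balls about `p` are compact), and suppose that for each `R` there is an
`r > 0` such that every point `a` of the closed `R`-ball about `p` has the ball
`B(a; 3r)` contained in a simply connected open set.  Then for each `R > 0` the set
`K(p, R)` of homotopy classes of loops at `p` of length `< R` is finite. -/
theorem stmt10 {X : Type*} [MetricSpace X] [ConnectedSpace X] (p : X)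
    (hproper : ∀ R : ℝ, IsCompact (Metric.closedBall p R))
    (hlength : ∀ x y : X, ∀ ε : ℝ, 0 < ε →
      ∃ γ : Path x y, pathLength γ < ENNReal.ofReal (dist x y + ε))
    (hsc : ∀ R : ℝ, ∃ r : ℝ, 0 < r ∧ ∀ a ∈ Metric.closedBall p R,
      ∃ s : Set X, IsOpen s ∧ SimplyConnectedSpace s ∧ Metric.ball a (3 * r) ⊆ s) :
    ∀ R : ℝ, 0 < R →
      Set.Finite {c : Path.Homotopic.Quotient p p |
        ∃ γ : Path p p, pathLength γ < ENNReal.ofReal R ∧ (⟦γ⟧ : Path.Homotopic.Quotient p p) = c} :=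
  stmt10_general p hproper hlength hsc
end

section
/- Let X be a connected noncompact topological space exhausted by an increasing sequence of relatively compact domains Ω₀ ⋐ Ω₁ ⋐ Ω₂ ⋐ …, equipped with a length metric induced by a Riemannian-type metric g. Then there exists a continuous function α : X → (1,∞) such that for any positive smooth function β with β ≥ α outside some compact set, the conformally rescaled metric h = β·g has the property that x ↦ dist_h(x, p) is an exhaustion function for each p ∈ X; in particular dist_h is complete. -/
open MeasureTheory

/-- The length of a C¹ path `γ : [0,1] → ℝᵐ` with respect to the metric `h = β·g`, where
the Riemannian/Finsler metric `g` is given by the pointwise norm `F` and `β` is a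
positive conformal factor (so `|v|_h = √β · F(·, v)`). -/
noncomputable def wLength {m : ℕ} (β : (Fin m → ℝ) → ℝ)
    (F : (Fin m → ℝ) → (Fin m → ℝ) → ℝ) (γ : ℝ → (Fin m → ℝ)) : ℝ :=
  ∫ t in (0:ℝ)..1, Real.sqrt (β (γ t)) * F (γ t) (deriv γ t)

/-- The associated path-length distance inside `Ω`, over piecewise C^∞ (here C¹) paths. -/
noncomputable def wDist {m : ℕ} (Ω : Set (Fin m → ℝ)) (β : (Fin m → ℝ) → ℝ)
    (F : (Fin m → ℝ) → (Fin m → ℝ) → ℝ) (x y : Fin m → ℝ) : ℝ :=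
  sInf {L : ℝ | ∃ γ : ℝ → (Fin m → ℝ), ContDiffOn ℝ 1 γ (Set.Icc 0 1) ∧
    (∀ t ∈ Set.Icc (0:ℝ) 1, γ t ∈ Ω) ∧ γ 0 = x ∧ γ 1 = y ∧ L = wLength β F γ}

/-!
Choose `r ν > 0` with `thickening (r ν) (Ωseq ν) ⊆ Ωseq (ν + 1)` and `ε ν > 0` with
`ε ν * ‖v‖ ≤ F z v` on `closure (Ωseq ν)`. If `α ≥ (2 / (ε (ν + 1) * r ν)) ^ 2` wherever `z` is
`r ν / 2`-far from `Ωseq ν`, then on the annulus `r ν / 2 ≤ infDist z (Ωseq ν) < r ν` the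
`α·g`-speed is at least `2 / r ν` times the Euclidean speed, so every path crossing the annulus
has `α·g`-length, and away from `K` also `β·g`-length, at least `1`. A path from
`p ∈ Ωseq M ⊇ K` to a point outside `Ωseq (M + n)` crosses `n` such annuli; with `n > c` this
puts `{z | dist_h(p, z) ≤ c}` inside the compact set `closure (Ωseq (M + n))`.
-/

open Set

section C1Paths

variable {E : Type*} [NormedAddCommGroup E] [NormedSpace ℝ E]

/-- Being constant outside `[0, 1]` makes concatenation of such paths a plain sum, with no
matching of derivatives at the junction. -/
def C1JoinedIn (s : Set E) (x y : E) : Prop :=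
  ∃ γ : ℝ → E, ContDiff ℝ 1 γ ∧ (∀ t, γ t ∈ s) ∧ (∀ t ≤ 0, γ t = x) ∧ ∀ t, 1 ≤ t → γ t = y

namespace C1JoinedIn

variable {s : Set E} {x y z : E}

theorem trans (hxy : C1JoinedIn s x y) (hyz : C1JoinedIn s y z) : C1JoinedIn s x z := by
  obtain ⟨γ₁, hγ₁, hs₁, h₁x, h₁y⟩ := hxy
  obtain ⟨γ₂, hγ₂, hs₂, h₂y, h₂z⟩ := hyz
  refine ⟨fun t => γ₁ (2 * t) + (γ₂ (2 * t - 1) - y), ?_, fun t => ?_, fun t ht => ?_,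
    fun t ht => ?_⟩
  · exact (hγ₁.comp (contDiff_const.mul contDiff_id)).add
      ((hγ₂.comp ((contDiff_const.mul contDiff_id).sub contDiff_const)).sub contDiff_const)
  · rcases le_total t (1 / 2) with ht | ht
    · simpa [h₂y (2 * t - 1) (by linarith)] using hs₁ (2 * t)
    · simpa [h₁y (2 * t) (by linarith)] using hs₂ (2 * t - 1)
  · simp [h₁x (2 * t) (by linarith), h₂y (2 * t - 1) (by linarith)]
  · simp [h₁y (2 * t) (by linarith), h₂z (2 * t - 1) (by linarith)]

theorem of_segment_subset (h : segment ℝ x y ⊆ s) : C1JoinedIn s x y := by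
  refine ⟨fun t => x + Real.smoothTransition t • (y - x), ?_, fun t => h ?_, fun t ht => ?_,
    fun t ht => ?_⟩
  · exact contDiff_const.add (Real.smoothTransition.contDiff.smul contDiff_const)
  · rw [segment_eq_image']
    exact ⟨_, ⟨Real.smoothTransition.nonneg t, Real.smoothTransition.le_one t⟩, rfl⟩
  · simp [Real.smoothTransition.zero_of_nonpos ht]
  · simp [Real.smoothTransition.one_of_one_le ht]

end C1JoinedIn

theorem IsOpen.c1JoinedIn_of_isPreconnected {s : Set E} (hs : IsOpen s) (hsc : IsPreconnected s)
    {x y : E} (hx : x ∈ s) (hy : y ∈ s) : C1JoinedIn s x y := by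
  refine hsc.induction₂' _ (fun z hz => ?_) (fun _ _ _ _ _ _ => C1JoinedIn.trans) hx hy
  obtain ⟨r, hr, hball⟩ := Metric.isOpen_iff.mp hs z hz
  filter_upwards [nhdsWithin_le_nhds (Metric.ball_mem_nhds z hr)] with w hw
  have hconv := convex_ball z r
  exact ⟨.of_segment_subset ((hconv.segment_subset (Metric.mem_ball_self hr) hw).trans hball),
    .of_segment_subset ((hconv.segment_subset hw (Metric.mem_ball_self hr)).trans hball)⟩

end C1Paths

theorem exists_pos_mul_norm_le_of_isCompact {X E : Type*} [TopologicalSpace X]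
    [NormedAddCommGroup E] [NormedSpace ℝ E] [ProperSpace E] {F : X → E → ℝ}
    (hF : Continuous fun p : X × E => F p.1 p.2) {C : Set X} (hC : IsCompact C)
    (hpos : ∀ z ∈ C, ∀ v : E, v ≠ 0 → 0 < F z v)
    (hhom : ∀ z ∈ C, ∀ (c : ℝ) (v : E), F z (c • v) = |c| * F z v) :
    ∃ e > 0, ∀ z ∈ C, ∀ v : E, e * ‖v‖ ≤ F z v := by
  obtain ⟨e, he, hle⟩ := (hC.prod (isCompact_sphere (0 : E) 1)).exists_forall_le'
    hF.continuousOn (a := 0) fun p hp => hpos p.1 hp.1 p.2 (ne_zero_of_mem_unit_sphere ⟨_, hp.2⟩)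
  refine ⟨e, he, fun z hz v => ?_⟩
  rcases eq_or_ne v 0 with rfl | hv
  · simp [show F z 0 = 0 by simpa using hhom z hz 0 0]
  have hunit : ‖v‖⁻¹ • v ∈ Metric.sphere (0 : E) 1 := by
    simp [norm_smul, hv]
  calc e * ‖v‖ ≤ F z (‖v‖⁻¹ • v) * ‖v‖ :=
        mul_le_mul_of_nonneg_right (hle (z, _) ⟨hz, hunit⟩) (norm_nonneg v)
    _ = F z v := by
        rw [hhom z hz, abs_inv, abs_norm]; field_simp

section LocallyFiniteSum

variable {X : Type*} {U : ℕ → Set X} {f : ℕ → X → ℝ}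

theorem hasSum_sum_range_of_eq_zero (hU : Monotone U) (hf0 : ∀ n, ∀ x ∈ U n, f n x = 0)
    {N : ℕ} {x : X} (hx : x ∈ U N) :
    HasSum (fun n => f n x) (∑ n ∈ Finset.range N, f n x) :=
  hasSum_sum_of_ne_finset_zero fun n hn =>
    hf0 n x (hU (not_lt.mp (by simpa using hn)) hx)

theorem continuousOn_tsum_of_eq_zero [TopologicalSpace X] (hUo : ∀ n, IsOpen (U n))
    (hU : Monotone U) (hf : ∀ n, Continuous (f n)) (hf0 : ∀ n, ∀ x ∈ U n, f n x = 0) :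
    ContinuousOn (fun x => ∑' n, f n x) (⋃ n, U n) := by
  rintro x ⟨_, ⟨N, rfl⟩, hx⟩
  refine ((continuous_finsetSum (Finset.range N) fun n _ => hf n).continuousAt.congr ?_)
    |>.continuousWithinAt
  filter_upwards [(hUo N).mem_nhds hx] with y hy
  exact (hasSum_sum_range_of_eq_zero hU hf0 hy).tsum_eq.symm

end LocallyFiniteSum

theorem exists_continuousOn_ge_of_infDist_ge {E : Type*} [PseudoMetricSpace E] {U : ℕ → Set E}
    (hUo : ∀ n, IsOpen (U n)) (hU : Monotone U) {a δ : ℕ → ℝ} (ha : ∀ n, 0 ≤ a n)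
    (hδ : ∀ n, 0 < δ n) :
    ∃ α : E → ℝ, ContinuousOn α (⋃ n, U n) ∧ (∀ z ∈ ⋃ n, U n, 1 < α z) ∧
      ∀ n, ∀ z ∈ ⋃ n, U n, δ n ≤ Metric.infDist z (U n) → a n ≤ α z := by
  set f : ℕ → E → ℝ := fun n z => a n * min 1 (Metric.infDist z (U n) / δ n)
  have hf0 : ∀ n, ∀ z ∈ U n, f n z = 0 := fun n z hz => by
    simp [f, Metric.infDist_zero_of_mem hz]
  have hf_nonneg : ∀ n z, 0 ≤ f n z := fun n z =>
    mul_nonneg (ha n) (le_min zero_le_one (div_nonneg Metric.infDist_nonneg (hδ n).le))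
  have hsum : ∀ z ∈ ⋃ n, U n, Summable fun n => f n z := by
    rintro z ⟨_, ⟨N, rfl⟩, hz⟩
    exact (hasSum_sum_range_of_eq_zero hU hf0 hz).summable
  refine ⟨fun z => 2 + ∑' n, f n z, continuousOn_const.add
    (continuousOn_tsum_of_eq_zero hUo hU (fun n => ?_) hf0), fun z _ => ?_, fun n z hz hδz => ?_⟩
  · exact continuous_const.mul
      (continuous_const.min ((Metric.continuous_infDist_pt _).div_const _))
  · linarith [show 0 ≤ ∑' n, f n z from tsum_nonneg fun n => hf_nonneg n z]
  · have hfn : f n z = a n := by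
      simp [f, (one_le_div (hδ n)).2 hδz]
    linarith [(hsum z hz).le_tsum n fun j _ => hf_nonneg j z]

theorem monotone_of_closure_subset_succ {X : Type*} [TopologicalSpace X] {U : ℕ → Set X}
    (h : ∀ n, closure (U n) ⊆ U (n + 1)) : Monotone U :=
  monotone_nat_of_le_succ fun n => subset_closure.trans (h n)

theorem exists_conformal_factor {E : Type*} [NormedAddCommGroup E] [NormedSpace ℝ E]
    [ProperSpace E] {U : ℕ → Set E} (hUo : ∀ ν, IsOpen (U ν))
    (hUc : ∀ ν, IsCompact (closure (U ν))) (hUsub : ∀ ν, closure (U ν) ⊆ U (ν + 1))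
    {Ω : Set E} (hUΩ : ⋃ ν, U ν = Ω) {F : E → E → ℝ}
    (hF : Continuous fun p : E × E => F p.1 p.2) (hFpos : ∀ z ∈ Ω, ∀ v : E, v ≠ 0 → 0 < F z v)
    (hFhom : ∀ z ∈ Ω, ∀ (c : ℝ) (v : E), F z (c • v) = |c| * F z v) :
    ∃ α : E → ℝ, ContinuousOn α Ω ∧ (∀ z ∈ Ω, 1 < α z) ∧
      ∃ r : ℕ → ℝ, (∀ ν, 0 < r ν) ∧ (∀ ν, Metric.thickening (r ν) (U ν) ⊆ U (ν + 1)) ∧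
        ∀ ν, ∀ z ∈ U (ν + 1), r ν / 2 ≤ Metric.infDist z (U ν) →
          ∀ v : E, ‖v‖ ≤ r ν / 2 * (Real.sqrt (α z) * F z v) := by
  choose r hr hthick using fun ν =>
    (hUc ν).exists_thickening_subset_open (hUo (ν + 1)) (hUsub ν)
  simp only [Metric.thickening_closure] at hthick
  subst hUΩ
  have hclΩ : ∀ ν, closure (U ν) ⊆ ⋃ ν, U ν := fun ν => (hUsub ν).trans (subset_iUnion _ _)
  choose ε hε hεF using fun ν => exists_pos_mul_norm_le_of_isCompact hF (hUc ν)
    (fun z hz => hFpos z (hclΩ ν hz)) (fun z hz => hFhom z (hclΩ ν hz))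
  obtain ⟨α, hαc, hα1, hαa⟩ := exists_continuousOn_ge_of_infDist_ge hUo
    (monotone_of_closure_subset_succ hUsub) (a := fun ν => (2 / (ε (ν + 1) * r ν)) ^ 2)
    (fun ν => sq_nonneg _) (fun ν => half_pos (hr ν))
  refine ⟨α, hαc, hα1, r, hr, hthick, fun ν z hz hfar v => ?_⟩
  have hα : 2 / (ε (ν + 1) * r ν) ≤ Real.sqrt (α z) :=
    Real.le_sqrt_of_sq_le (hαa ν z (mem_iUnion_of_mem _ hz) hfar)
  calc ‖v‖ = r ν / 2 * (2 / (ε (ν + 1) * r ν) * (ε (ν + 1) * ‖v‖)) := by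
        field_simp [(hε (ν + 1)).ne', (hr ν).ne']
    _ ≤ r ν / 2 * (Real.sqrt (α z) * F z v) := by
        exact mul_le_mul_of_nonneg_left (mul_le_mul hα (hεF _ z (subset_closure hz) v)
          (mul_nonneg (hε _).le (norm_nonneg v)) (Real.sqrt_nonneg _)) (half_pos (hr ν)).le

theorem ContinuousOn.exists_Ioo_crossing {d : ℝ → ℝ} {s t u v : ℝ} (hst : s ≤ t)
    (hd : ContinuousOn d (Icc s t)) (hs : d s ≤ u) (ht : v ≤ d t) (huv : u < v) :
    ∃ a b, s ≤ a ∧ a < b ∧ b ≤ t ∧ d a = u ∧ v ≤ d b ∧ ∀ x ∈ Ioo a b, u < d x ∧ d x < v := by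
  have hB : IsClosed (Icc s t ∩ d ⁻¹' Ici v) :=
    hd.preimage_isClosed_of_isClosed isClosed_Icc isClosed_Ici
  obtain ⟨b, ⟨⟨hsb, hbt⟩, hvb⟩, hb_least⟩ :=
    (isCompact_Icc.of_isClosed_subset hB inter_subset_left).exists_isLeast
      ⟨t, ⟨hst, le_rfl⟩, ht⟩
  have hA : IsClosed (Icc s b ∩ d ⁻¹' Iic u) :=
    (hd.mono (Icc_subset_Icc_right hbt)).preimage_isClosed_of_isClosed isClosed_Icc isClosed_Iic
  obtain ⟨a, ⟨⟨hsa, hab⟩, hau⟩, ha_greatest⟩ :=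
    (isCompact_Icc.of_isClosed_subset hA inter_subset_left).exists_isGreatest
      ⟨s, ⟨le_rfl, hsb⟩, hs⟩
  have hab : a < b := lt_of_le_of_ne hab fun h => by
    have : v ≤ d a := h ▸ hvb
    linarith [show d a ≤ u from hau]
  have hbetween : ∀ x ∈ Ioo a b, u < d x ∧ d x < v := fun x hx =>
    ⟨lt_of_not_ge fun hx' => hx.1.not_ge (ha_greatest ⟨⟨hsa.trans hx.1.le, hx.2.le⟩, hx'⟩),
      lt_of_not_ge fun hx' => hx.2.not_ge
        (hb_least ⟨⟨hsa.trans hx.1.le, hx.2.le.trans hbt⟩, hx'⟩)⟩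
  -- `d ≥ u` on `(a, b)`, hence on its closure
  have hua : a ∈ Icc s t ∩ d ⁻¹' Ici u := by
    refine (hd.preimage_isClosed_of_isClosed isClosed_Icc isClosed_Ici).closure_subset_iff.2
      (fun x hx => ⟨⟨hsa.trans hx.1.le, hx.2.le.trans hbt⟩, (hbetween x hx).1.le⟩) ?_
    rw [closure_Ioo hab.ne]
    exact left_mem_Icc.2 hab.le
  exact ⟨a, b, hsa, hab, hbt, le_antisymm hau hua.2, hvb, hbetween⟩

section Crossing

variable {E : Type*} [NormedAddCommGroup E] [NormedSpace ℝ E]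

theorem one_le_integral_of_crossing {γ : ℝ → E} {G : ℝ → ℝ} {ρ : E → ℝ} (hρ : LipschitzWith 1 ρ)
    {s t u v : ℝ} (hst : s ≤ t) (hγc : ContinuousOn γ (Icc s t))
    (hγd : DifferentiableOn ℝ γ (Ioo s t)) (hG : IntervalIntegrable G volume s t)
    (hG0 : ∀ x ∈ Icc s t, 0 ≤ G x) (hs : ρ (γ s) ≤ u) (ht : v ≤ ρ (γ t)) (huv : u < v)
    (hspeed : ∀ x ∈ Ioo s t, u < ρ (γ x) → ρ (γ x) < v → ‖deriv γ x‖ ≤ (v - u) * G x) :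
    ∃ a ∈ Icc s t, ρ (γ a) = u ∧ 1 ≤ ∫ x in a..t, G x := by
  obtain ⟨a, b, hsa, hab, hbt, hau, hvb, hbetween⟩ :=
    (hρ.continuous.comp_continuousOn hγc).exists_Ioo_crossing hst hs ht huv
  simp only [Function.comp_apply] at hau hvb hbetween
  have hsub : Icc a b ⊆ Icc s t := Icc_subset_Icc hsa hbt
  have hGab : IntervalIntegrable G volume a b :=
    hG.mono_set (by rwa [uIcc_of_le hab.le, uIcc_of_le hst])
  have hGbt : IntervalIntegrable G volume b t :=
    hG.mono_set (by
      rw [uIcc_of_le hbt, uIcc_of_le hst]; exact Icc_subset_Icc (hsa.trans hab.le) le_rfl)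
  have hdisp : (v - u) * 1 ≤ (v - u) * ∫ x in a..b, G x := by
    calc (v - u) * 1 ≤ ρ (γ b) - ρ (γ a) := by linarith
      _ ≤ ‖γ b - γ a‖ := by
        simpa [dist_eq_norm] using (le_abs_self _).trans (hρ.dist_le_mul (γ b) (γ a))
      _ ≤ ∫ x in a..b, (v - u) * G x :=
        norm_sub_le_integral_of_norm_deriv_le_of_le hab.le (hγc.mono hsub)
          (hγd.mono (Ioo_subset_Ioo hsa hbt))
          (ae_of_all _ fun x hx => hspeed x (Ioo_subset_Ioo hsa hbt hx) (hbetween x hx).1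
            (hbetween x hx).2) (hGab.const_mul _)
      _ = (v - u) * ∫ x in a..b, G x := intervalIntegral.integral_const_mul _ _
  have hbt0 : 0 ≤ ∫ x in b..t, G x :=
    intervalIntegral.integral_nonneg hbt fun x hx => hG0 x ⟨(hsa.trans hab.le).trans hx.1, hx.2⟩
  refine ⟨a, ⟨hsa, hab.le.trans hbt⟩, hau, ?_⟩
  rw [← intervalIntegral.integral_add_adjacent_intervals hGab hGbt]
  linarith [le_of_mul_le_mul_left hdisp (sub_pos.2 huv)]

theorem nat_le_integral_of_exhaustion {γ : ℝ → E} {G : ℝ → ℝ} (hγc : ContinuousOn γ (Icc 0 1))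
    (hγd : DifferentiableOn ℝ γ (Ioo 0 1)) (hG : IntervalIntegrable G volume 0 1)
    (hG0 : ∀ x ∈ Icc (0 : ℝ) 1, 0 ≤ G x) {U : ℕ → Set E} (hU : Monotone U) {r : ℕ → ℝ}
    (hr : ∀ ν, 0 < r ν) (hthick : ∀ ν, Metric.thickening (r ν) (U ν) ⊆ U (ν + 1)) {M : ℕ}
    (h0 : γ 0 ∈ U M)
    (hspeed : ∀ ν ≥ M, ∀ x ∈ Ioo (0 : ℝ) 1, γ x ∈ U (ν + 1) →
      r ν / 2 ≤ Metric.infDist (γ x) (U ν) → ‖deriv γ x‖ ≤ r ν / 2 * G x)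
    (n : ℕ) {t : ℝ} (ht : t ∈ Icc (0 : ℝ) 1) (hγt : γ t ∉ U (M + n)) :
    n ≤ ∫ x in 0..t, G x := by
  have hGsub : ∀ {a b}, a ∈ Icc (0 : ℝ) 1 → b ∈ Icc (0 : ℝ) 1 → IntervalIntegrable G volume a b :=
    fun ha hb => hG.mono_set (uIcc_subset_uIcc (by rwa [uIcc_of_le zero_le_one])
      (by rwa [uIcc_of_le zero_le_one]))
  induction n generalizing t with
  | zero =>
    simpa using intervalIntegral.integral_nonneg ht.1 fun x hx => hG0 x ⟨hx.1, hx.2.trans ht.2⟩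
  | succ n ih =>
    set ν := M + n
    have hMν : M ≤ ν := Nat.le_add_right M n
    have hnear : ∀ z, Metric.infDist z (U ν) < r ν → z ∈ U (ν + 1) := fun z h =>
      hthick ν ((Metric.mem_thickening_iff_infDist_lt ⟨γ 0, hU hMν h0⟩).2 h)
    have hfar : r ν ≤ Metric.infDist (γ t) (U ν) := not_lt.1 fun h => hγt (hnear _ h)
    obtain ⟨a, ha, hau, hcross⟩ := one_le_integral_of_crossing (Metric.lipschitz_infDist_pt (U ν))
      ht.1 (hγc.mono (Icc_subset_Icc_right ht.2)) (hγd.mono (Ioo_subset_Ioo_right ht.2))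
      (hGsub (left_mem_Icc.2 zero_le_one) ht) (fun x hx => hG0 x ⟨hx.1, hx.2.trans ht.2⟩)
      (by rw [Metric.infDist_zero_of_mem (hU hMν h0)]; exact (half_pos (hr ν)).le) hfar
      (half_lt_self (hr ν)) fun x hx h₁ h₂ => by
        rw [sub_half]; exact hspeed ν hMν x ⟨hx.1, hx.2.trans_le ht.2⟩ (hnear _ h₂) h₁.le
    have haI : a ∈ Icc (0 : ℝ) 1 := ⟨ha.1, ha.2.trans ht.2⟩
    have hγa : γ a ∉ U ν := fun h => by
      rw [Metric.infDist_zero_of_mem h] at hau; linarith [hr ν]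
    rw [← intervalIntegral.integral_add_adjacent_intervals
      (hGsub (left_mem_Icc.2 zero_le_one) haI) (hGsub haI ht)]
    push_cast
    linarith [ih haI hγa]

theorem ContDiffOn.intervalIntegrable_comp_deriv {F' : Type*} [NormedAddCommGroup F']
    {γ : ℝ → E} {a b : ℝ} (hab : a ≤ b) (hγ : ContDiffOn ℝ 1 γ (Icc a b)) {s : Set E}
    (hs : MapsTo γ (Icc a b) s) {Φ : E → E → F'}
    (hΦ : ContinuousOn (fun p : E × E => Φ p.1 p.2) (s ×ˢ univ)) :
    IntervalIntegrable (fun t => Φ (γ t) (deriv γ t)) volume a b := by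
  rcases hab.eq_or_lt with rfl | hab
  · exact IntervalIntegrable.refl
  have hcont : ContinuousOn (fun t => Φ (γ t) (derivWithin γ (Icc a b) t)) (Icc a b) :=
    hΦ.comp (hγ.continuousOn.prodMk
      (hγ.continuousOn_derivWithin (uniqueDiffOn_Icc hab) le_rfl)) fun t ht => ⟨hs ht, trivial⟩
  rw [intervalIntegrable_iff_integrableOn_Ioo_of_le hab.le]
  refine (hcont.integrableOn_Icc.mono_set Ioo_subset_Icc_self).congr_fun (fun t ht => ?_)
    measurableSet_Ioo
  simp only [derivWithin_of_mem_nhds (Icc_mem_nhds ht.1 ht.2)]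

end Crossing

theorem nat_le_wLength {m : ℕ} {Ω : Set (Fin m → ℝ)} {β : (Fin m → ℝ) → ℝ}
    {F : (Fin m → ℝ) → (Fin m → ℝ) → ℝ} (hβ : ContinuousOn β Ω)
    (hF : Continuous fun p : (Fin m → ℝ) × (Fin m → ℝ) => F p.1 p.2)
    (hF0 : ∀ z ∈ Ω, ∀ v, 0 ≤ F z v) {γ : ℝ → (Fin m → ℝ)} (hγ : ContDiffOn ℝ 1 γ (Icc 0 1))
    (hγΩ : ∀ t ∈ Icc (0 : ℝ) 1, γ t ∈ Ω) {U : ℕ → Set (Fin m → ℝ)} (hU : Monotone U)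
    {r : ℕ → ℝ} (hr : ∀ ν, 0 < r ν) (hthick : ∀ ν, Metric.thickening (r ν) (U ν) ⊆ U (ν + 1))
    {M : ℕ} (h0 : γ 0 ∈ U M)
    (hspeed : ∀ ν ≥ M, ∀ z ∈ Ω, z ∈ U (ν + 1) → r ν / 2 ≤ Metric.infDist z (U ν) →
      ∀ v, ‖v‖ ≤ r ν / 2 * (Real.sqrt (β z) * F z v))
    (n : ℕ) (h1 : γ 1 ∉ U (M + n)) : n ≤ wLength β F γ :=
  nat_le_integral_of_exhaustion hγ.continuousOn
    ((hγ.differentiableOn one_ne_zero).mono Ioo_subset_Icc_self)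
    (hγ.intervalIntegrable_comp_deriv zero_le_one hγΩ (Φ := fun z v => Real.sqrt (β z) * F z v)
      ((Real.continuous_sqrt.comp_continuousOn (hβ.comp continuousOn_fst fun _ hp => hp.1)).mul
        hF.continuousOn))
    (fun x hx => mul_nonneg (Real.sqrt_nonneg _) (hF0 _ (hγΩ x hx) _)) hU hr hthick h0
    (fun ν hν x hx h₁ h₂ => hspeed ν hν _ (hγΩ x (Ioo_subset_Icc_self hx)) h₁ h₂ _) n
    (right_mem_Icc.2 zero_le_one) h1

theorem stmt12_general {m : ℕ} (Ω : Set (Fin m → ℝ)) (hΩo : IsOpen Ω) (hΩc : IsConnected Ω)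
    (Ωseq : ℕ → Set (Fin m → ℝ))
    (hseq_open : ∀ ν, IsOpen (Ωseq ν))
    (hseq_cpt : ∀ ν, IsCompact (closure (Ωseq ν)))
    (hseq_sub : ∀ ν, closure (Ωseq ν) ⊆ Ωseq (ν + 1))
    (hseq_in : ∀ ν, closure (Ωseq ν) ⊆ Ω)
    (hseq_union : (⋃ ν, Ωseq ν) = Ω)
    (F : (Fin m → ℝ) → (Fin m → ℝ) → ℝ)
    (hFcont : Continuous fun p : (Fin m → ℝ) × (Fin m → ℝ) => F p.1 p.2)
    (hFpos : ∀ z ∈ Ω, ∀ v : Fin m → ℝ, v ≠ 0 → 0 < F z v)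
    (hFhom : ∀ z ∈ Ω, ∀ (c : ℝ) (v : Fin m → ℝ), F z (c • v) = |c| * F z v) :
    ∃ α : (Fin m → ℝ) → ℝ, ContinuousOn α Ω ∧ (∀ z ∈ Ω, 1 < α z) ∧
      ∀ β : (Fin m → ℝ) → ℝ, ContDiffOn ℝ (⊤ : ℕ∞) β Ω → (∀ z ∈ Ω, 0 < β z) →
        (∃ K : Set (Fin m → ℝ), IsCompact K ∧ K ⊆ Ω ∧ ∀ z ∈ Ω \ K, α z ≤ β z) →
        ∀ p ∈ Ω, ∀ c : ℝ,
          ∃ K' : Set (Fin m → ℝ), IsCompact K' ∧ K' ⊆ Ω ∧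
            {z ∈ Ω | wDist Ω β F p z ≤ c} ⊆ K' := by
  obtain ⟨α, hαc, hα1, r, hr, hthick, hstretch⟩ :=
    exists_conformal_factor hseq_open hseq_cpt hseq_sub hseq_union hFcont hFpos hFhom
  have hU := monotone_of_closure_subset_succ hseq_sub
  have hF0 : ∀ z ∈ Ω, ∀ v, 0 ≤ F z v := fun z hz v => by
    rcases eq_or_ne v 0 with rfl | hv
    · simpa using (hFhom z hz 0 0).ge
    · exact (hFpos z hz v hv).le
  refine ⟨α, hαc, hα1, ?_⟩
  rintro β hβ - ⟨K, hK, hKΩ, hαβ⟩ p hp c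
  obtain ⟨M, hM⟩ := (hK.insert p).elim_directed_cover Ωseq hseq_open
    ((insert_subset hp hKΩ).trans hseq_union.symm.subset) hU.directed_le
  obtain ⟨n, hn⟩ := exists_nat_gt c
  have hspeed : ∀ ν ≥ M, ∀ w ∈ Ω, w ∈ Ωseq (ν + 1) → r ν / 2 ≤ Metric.infDist w (Ωseq ν) →
      ∀ v, ‖v‖ ≤ r ν / 2 * (Real.sqrt (β w) * F w v) := by
    intro ν hν w hw hwν hfar v
    have hwK : w ∉ K := fun h => by
      rw [Metric.infDist_zero_of_mem (hU hν (hM (mem_insert_of_mem p h)))] at hfar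
      linarith [hr ν]
    refine (hstretch ν w hwν hfar v).trans (mul_le_mul_of_nonneg_left ?_ (half_pos (hr ν)).le)
    exact mul_le_mul_of_nonneg_right (Real.sqrt_le_sqrt (hαβ w ⟨hw, hwK⟩)) (hF0 w hw v)
  refine ⟨closure (Ωseq (M + n)), hseq_cpt _, hseq_in _, fun z ⟨hz, hzc⟩ => by_contra fun hzn => ?_⟩
  obtain ⟨γ₀, hγ₀, hγ₀Ω, hγ₀0, hγ₀1⟩ := hΩo.c1JoinedIn_of_isPreconnected hΩc.isPreconnected hp hz
  have hdist : (n : ℝ) ≤ wDist Ω β F p z := by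
    refine le_csInf ⟨_, γ₀, hγ₀.contDiffOn, fun t _ => hγ₀Ω t, hγ₀0 0 le_rfl, hγ₀1 1 le_rfl, rfl⟩ ?_
    rintro _ ⟨γ, hγ, hγΩ, hγ0, hγ1, rfl⟩
    exact nat_le_wLength hβ.continuousOn hFcont hF0 hγ hγΩ hU hr hthick
      (hγ0 ▸ hM (mem_insert p K)) hspeed n (hγ1 ▸ fun h => hzn (subset_closure h))
  linarith

/-- **Proposition.** Let `X = Ω` be a connected noncompact manifold (an open connected
noncompact subset of `ℝᵐ`) exhausted by relatively compact domains
`Ω₀ ⋐ Ω₁ ⋐ ⋯`, with a Riemannian-type metric `g` given by a continuous positively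
homogeneous pointwise norm `F`.  Then there is a continuous `α : Ω → (1,∞)` such that for
every positive smooth `β` with `β ≥ α` off some compact set, the rescaled metric
`h = β·g` has `x ↦ dist_h(x, p)` an exhaustion function for every `p ∈ Ω` (all sublevel
sets are relatively compact in `Ω`); in particular `dist_h` is complete. -/
theorem stmt12 {m : ℕ} (Ω : Set (Fin m → ℝ)) (hΩo : IsOpen Ω) (hΩc : IsConnected Ω)
    (hΩnc : ¬ IsCompact Ω)
    (Ωseq : ℕ → Set (Fin m → ℝ))
    (hseq_open : ∀ ν, IsOpen (Ωseq ν)) (hseq_conn : ∀ ν, IsConnected (Ωseq ν))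
    (hseq_cpt : ∀ ν, IsCompact (closure (Ωseq ν)))
    (hseq_sub : ∀ ν, closure (Ωseq ν) ⊆ Ωseq (ν + 1))
    (hseq_in : ∀ ν, closure (Ωseq ν) ⊆ Ω)
    (hseq_union : (⋃ ν, Ωseq ν) = Ω)
    (F : (Fin m → ℝ) → (Fin m → ℝ) → ℝ)
    (hFcont : Continuous fun p : (Fin m → ℝ) × (Fin m → ℝ) => F p.1 p.2)
    (hFpos : ∀ z ∈ Ω, ∀ v : Fin m → ℝ, v ≠ 0 → 0 < F z v)
    (hFhom : ∀ z ∈ Ω, ∀ (c : ℝ) (v : Fin m → ℝ), F z (c • v) = |c| * F z v) :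
    ∃ α : (Fin m → ℝ) → ℝ, ContinuousOn α Ω ∧ (∀ z ∈ Ω, 1 < α z) ∧
      ∀ β : (Fin m → ℝ) → ℝ, ContDiffOn ℝ (⊤ : ℕ∞) β Ω → (∀ z ∈ Ω, 0 < β z) →
        (∃ K : Set (Fin m → ℝ), IsCompact K ∧ K ⊆ Ω ∧ ∀ z ∈ Ω \ K, α z ≤ β z) →
        ∀ p ∈ Ω, ∀ c : ℝ,
          ∃ K' : Set (Fin m → ℝ), IsCompact K' ∧ K' ⊆ Ω ∧
            {z ∈ Ω | wDist Ω β F p z ≤ c} ⊆ K' :=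
  stmt12_general Ω hΩo hΩc Ωseq hseq_open hseq_cpt hseq_sub hseq_in hseq_union F hFcont hFpos hFhom
end

section
/- Let (X, g) be a Hermitian complex manifold, Z ⊆ X a properly embedded complex submanifold, and α a real-valued C^∞ function on X whose restriction to Z is strongly q-convex with respect to g|_Z (i.e. for every g-orthonormal q-frame e_1,…,e_q of T^{1,0}Z at a point of Z, Σⱼ L(α)(eⱼ,eⱼ) > 0). Suppose ρ is a C^∞ function on X with ρ(p) = 0, (dρ)_p = 0 for each p ∈ Z, and L(ρ)(v,v) > 0 for each v ∈ T^{1,0}_pX \ T^{1,0}Z with p ∈ Z. Then there exists a positive continuous function λ₀ on Z such that for every λ ∈ C^∞(X) with λ > λ₀ on Z, the function β = α + λ·ρ is strongly q-convex with respect to g on some neighborhood of Z in X. -/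
open MeasureTheory

/-- The Levi form of a (C²) function `φ` on an open subset of `ℂⁿ`, evaluated at the point
`z` in the complex tangent direction `v`:
`L(φ)_z(v, v̄) = (D²φ(v,v) + D²φ(iv,iv))/4`, where `D²φ` is the real Hessian. -/
noncomputable def leviForm {n : ℕ} (φ : (Fin n → ℂ) → ℝ) (z v : Fin n → ℂ) : ℝ :=
  (iteratedFDeriv ℝ 2 φ z ![v, v] +
      iteratedFDeriv ℝ 2 φ z ![Complex.I • v, Complex.I • v]) / 4

/-- A `q`-tuple of tangent vectors `e` at `z` is orthonormal with respect to the Hermitian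
metric `g`. -/
def OrthFrame {n q : ℕ} (g : (Fin n → ℂ) → (Fin n → ℂ) → (Fin n → ℂ) → ℂ)
    (z : Fin n → ℂ) (e : Fin q → (Fin n → ℂ)) : Prop :=
  ∀ i j, g z (e i) (e j) = if i = j then 1 else 0

/-- `φ` is C^∞ strongly `q`-convex with respect to the Hermitian metric `g` on `Ω`
(class `SP^∞(g,q)`): the trace of the Levi form on every `g`-orthonormal `q`-frame
is positive. -/
def StronglyQConvexOn {n : ℕ} (g : (Fin n → ℂ) → (Fin n → ℂ) → (Fin n → ℂ) → ℂ)
    (q : ℕ) (φ : (Fin n → ℂ) → ℝ) (Ω : Set (Fin n → ℂ)) : Prop :=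
  ∀ z ∈ Ω, ∀ e : Fin q → (Fin n → ℂ), OrthFrame g z e →
    0 < ∑ j, leviForm φ z (e j)

/-- `φ` is weakly `q`-convex with respect to `g` on `Ω` (class `W^∞(g,q)`): the trace of
the Levi form on every `g`-orthonormal `q`-frame is nonnegative. -/
def WeaklyQConvexOn {n : ℕ} (g : (Fin n → ℂ) → (Fin n → ℂ) → (Fin n → ℂ) → ℂ)
    (q : ℕ) (φ : (Fin n → ℂ) → ℝ) (Ω : Set (Fin n → ℂ)) : Prop :=
  ∀ z ∈ Ω, ∀ e : Fin q → (Fin n → ℂ), OrthFrame g z e →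
    0 ≤ ∑ j, leviForm φ z (e j)

/-- The Hermitian-metric hypotheses on `g` over `Ω`: continuity, linearity in the first
slot, conjugate symmetry, and positive definiteness. -/
def IsHermitianMetricOn {n : ℕ} (g : (Fin n → ℂ) → (Fin n → ℂ) → (Fin n → ℂ) → ℂ)
    (Ω : Set (Fin n → ℂ)) : Prop :=
  ContinuousOn (fun p : (Fin n → ℂ) × (Fin n → ℂ) × (Fin n → ℂ) => g p.1 p.2.1 p.2.2)
      (Ω ×ˢ Set.univ) ∧
    (∀ z ∈ Ω, ∀ w, IsLinearMap ℂ fun v => g z v w) ∧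
    (∀ z ∈ Ω, ∀ v w, g z w v = starRingEnd ℂ (g z v w)) ∧
    ∀ z ∈ Ω, ∀ v, v ≠ 0 → 0 < (g z v v).re

/-- `Z` is a properly embedded complex submanifold of the open set `Ω ⊆ ℂⁿ`:
`Z` is relatively closed in `Ω` and near every point of `Z` it admits an injective
holomorphic immersive parametrization from an open subset of some `ℂᵏ`. -/
def IsClosedSubmanifoldOf {n : ℕ} (k : ℕ) (Ω Z : Set (Fin n → ℂ)) : Prop :=
  Z ⊆ Ω ∧ closure Z ∩ Ω = Z ∧
    ∀ x ∈ Z, ∃ U : Set (Fin n → ℂ), IsOpen U ∧ x ∈ U ∧ U ⊆ Ω ∧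
      ∃ (V : Set (Fin k → ℂ)) (f : (Fin k → ℂ) → (Fin n → ℂ)),
        IsOpen V ∧ AnalyticOn ℂ f V ∧ Set.InjOn f V ∧
        (∀ v ∈ V, Function.Injective (fderiv ℂ f v)) ∧ f '' V = Z ∩ U

/-- `v` is a holomorphic tangent vector to the set `Z` at the point `p`. -/
def HolTangentAt {n : ℕ} (Z : Set (Fin n → ℂ)) (p v : Fin n → ℂ) : Prop :=
  ∃ γ : ℂ → (Fin n → ℂ), γ 0 = p ∧ (∀ᶠ w in nhds (0 : ℂ), γ w ∈ Z) ∧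
    AnalyticAt ℂ γ 0 ∧ deriv γ 0 = v


/-!
On `Z` the Levi form of `ρ` is positive semidefinite: it vanishes on tangent vectors of `Z`
(since `ρ` vanishes to second order along `Z`) and is positive on the others. Hence at each
`p ∈ Z` the compact set of orthonormal `q`-frames at `p` splits into frames on which the
`ρ`-trace vanishes, which are tangent to `Z` and where the `α`-trace is positive, and frames on
which the `ρ`-trace is positive; by compactness some constant `c` makes the trace of
`α + c ρ` positive on all of them, and by compactness of the frames over a small closed ball
also on all frames at points near `p`. Admissible constants form an upward closed, hence
convex, set, so a partition of unity on `Z` glues them into a continuous `λ₀`. At a point of `Z`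
the Levi form of `α + λ ρ` is `L(α) + λ(p) L(ρ)`, so its trace is positive on all frames at
points of `Z`, and the same compactness argument spreads this to a neighbourhood of `Z`.
-/

open Set Filter Topology Metric

section Calculus

variable {𝕜 E F : Type*} [NontriviallyNormedField 𝕜] [NormedAddCommGroup E] [NormedSpace 𝕜 E]
  [NormedAddCommGroup F] [NormedSpace 𝕜 F] {n : WithTop ℕ∞} {f : E → F} {x : E}

theorem ContDiffAt.eventually_differentiableAt (hf : ContDiffAt 𝕜 n f x) (hn : 1 ≤ n) :
    ∀ᶠ y in 𝓝 x, DifferentiableAt 𝕜 f y :=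
  ((hf.of_le hn).eventually (by simp)).mono fun _ hy => hy.differentiableAt one_ne_zero

theorem ContDiffAt.differentiableAt_fderiv (hf : ContDiffAt 𝕜 n f x) (hn : 2 ≤ n) :
    DifferentiableAt 𝕜 (fderiv 𝕜 f) x :=
  (hf.fderiv_right (m := 1) hn).differentiableAt one_ne_zero

/-- Differentiating `d(ρ ∘ γ) = dρ(γ) ∘ dγ` once more, the term containing `dρ(γ x) = 0` drops
out and only the Hessian of `ρ` on the image of `dγ` remains. -/
theorem fderiv_fderiv_apply_eq_zero_of_comp_eventuallyEq_zero {ρ : F → 𝕜} {γ : E → F}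
    (hρ : ContDiffAt 𝕜 2 ρ (γ x)) (hγ : ContDiffAt 𝕜 2 γ x) (hdρ : fderiv 𝕜 ρ (γ x) = 0)
    (hργ : (fun y => ρ (γ y)) =ᶠ[𝓝 x] fun _ => 0) (u : E) :
    fderiv 𝕜 (fderiv 𝕜 ρ) (γ x) (fderiv 𝕜 γ x u) (fderiv 𝕜 γ x u) = 0 := by
  have hchain : fderiv 𝕜 (fun y => ρ (γ y)) =ᶠ[𝓝 x]
      fun y => (fderiv 𝕜 ρ (γ y)).comp (fderiv 𝕜 γ y) := by
    filter_upwards [hγ.continuousAt.eventually (hρ.eventually_differentiableAt one_le_two),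
      hγ.eventually_differentiableAt one_le_two] with y hρy hγy using fderiv_comp y hρy hγy
  have hzero : fderiv 𝕜 (fun y => ρ (γ y)) =ᶠ[𝓝 x] fun _ => (0 : E →L[𝕜] 𝕜) :=
    hργ.fderiv.trans (.of_eq (funext fun _ => fderiv_const_apply (𝕜 := 𝕜) _))
  have hD := (hchain.symm.trans hzero).fderiv_eq (𝕜 := 𝕜)
  have hγx := hγ.differentiableAt two_ne_zero
  rw [fderiv_clm_comp (c := fun y => fderiv 𝕜 ρ (γ y))
    ((hρ.differentiableAt_fderiv le_rfl).comp x hγx) (hγ.differentiableAt_fderiv le_rfl),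
    fderiv_fun_comp x (hρ.differentiableAt_fderiv le_rfl) hγx, hdρ] at hD
  simpa using DFunLike.congr_fun (DFunLike.congr_fun hD u) u

end Calculus

theorem IsCompact.exists_forall_pos_add_mul {X : Type*} [TopologicalSpace X] {C : Set X}
    (hC : IsCompact C) {A R : X → ℝ} (hA : ContinuousOn A C) (hR : ContinuousOn R C)
    (hR0 : ∀ x ∈ C, 0 ≤ R x) (hAR : ∀ x ∈ C, R x = 0 → 0 < A x) :
    ∃ c : ℝ, ∀ x ∈ C, 0 < A x + c * R x := by
  have := isCompact_iff_compactSpace.mp hC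
  let U : ℕ → Set C := fun m => {x | 0 < A x + m * R x}
  have hU_open : ∀ m, IsOpen (U m) := fun m =>
    isOpen_lt continuous_const (hA.domRestrict.add (continuous_const.mul hR.domRestrict))
  have hU_mono : Monotone U := fun m m' hmm' x (hx : 0 < A x + m * R x) => by
    have := mul_le_mul_of_nonneg_right (Nat.cast_le.mpr hmm' : (m : ℝ) ≤ m') (hR0 x x.2)
    exact show 0 < A x + m' * R x by linarith
  have hU_cover : univ ⊆ ⋃ m, U m := fun x _ => by
    obtain hRx | hRx := (hR0 x x.2).eq_or_lt
    · exact mem_iUnion.mpr ⟨0, show 0 < A x + (0 : ℕ) * R x by simpa using hAR x x.2 hRx.symm⟩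
    · obtain ⟨m, hm⟩ := exists_nat_gt (-A x / R x)
      have := (div_lt_iff₀ hRx).mp hm
      exact mem_iUnion.mpr ⟨m, show 0 < A x + m * R x by linarith⟩
  obtain ⟨m, hm⟩ := isCompact_univ.elim_directed_cover U hU_open hU_cover hU_mono.directed_le
  exact ⟨m, fun x hx => hm (mem_univ (⟨x, hx⟩ : C))⟩

theorem exists_continuousOn_forall_mem_convex_of_local_const {X F : Type*} [MetricSpace X]
    [AddCommGroup F] [Module ℝ F] [TopologicalSpace F] [ContinuousAdd F] [ContinuousSMul ℝ F]
    {Z : Set X} {t : X → Set F} (ht : ∀ p ∈ Z, Convex ℝ (t p))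
    (H : ∀ p ∈ Z, ∃ c, ∀ᶠ y in 𝓝 p, c ∈ t y) :
    ∃ f : X → F, ContinuousOn f Z ∧ ∀ p ∈ Z, f p ∈ t p := by
  classical
  obtain ⟨f, hf⟩ := exists_continuous_forall_mem_convex_of_local_const
    (t := fun x : Z => t x) (fun x => ht x x.2)
    fun x => (H x x.2).imp fun _ hc => (continuous_subtype_val.tendsto x).eventually hc
  refine ⟨fun x => if hx : x ∈ Z then f ⟨x, hx⟩ else 0, ?_,
    fun p hp => by simpa [hp] using hf ⟨p, hp⟩⟩
  rw [continuousOn_iff_continuous_domRestrict]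
  convert f.continuous
  ext x
  simp [x.2]

section LeviForm

variable {n : ℕ}

theorem leviForm_eq_fderiv_fderiv (φ : (Fin n → ℂ) → ℝ) (z v : Fin n → ℂ) :
    leviForm φ z v = (fderiv ℝ (fderiv ℝ φ) z v v
      + fderiv ℝ (fderiv ℝ φ) z (Complex.I • v) (Complex.I • v)) / 4 := by
  simp [leviForm, iteratedFDeriv_two_apply]

theorem leviForm_add {φ ψ : (Fin n → ℂ) → ℝ} {z : Fin n → ℂ} (hφ : ContDiffAt ℝ 2 φ z)
    (hψ : ContDiffAt ℝ 2 ψ z) (v : Fin n → ℂ) :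
    leviForm (fun x => φ x + ψ x) z v = leviForm φ z v + leviForm ψ z v := by
  have hD : fderiv ℝ (fun x => φ x + ψ x) =ᶠ[𝓝 z] fun y => fderiv ℝ φ y + fderiv ℝ ψ y := by
    filter_upwards [hφ.eventually_differentiableAt one_le_two,
      hψ.eventually_differentiableAt one_le_two] with y hφy hψy using fderiv_add hφy hψy
  simp only [leviForm_eq_fderiv_fderiv, hD.fderiv_eq,
    fderiv_fun_add (hφ.differentiableAt_fderiv le_rfl) (hψ.differentiableAt_fderiv le_rfl),
    add_apply]
  ring

theorem leviForm_mul_of_fderiv_eq_zero {lam ρ : (Fin n → ℂ) → ℝ} {p : Fin n → ℂ}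
    (hlam : ContDiffAt ℝ 2 lam p) (hρ : ContDiffAt ℝ 2 ρ p) (hρp : ρ p = 0)
    (hdρp : fderiv ℝ ρ p = 0) (v : Fin n → ℂ) :
    leviForm (fun x => lam x * ρ x) p v = lam p * leviForm ρ p v := by
  have hD : fderiv ℝ (fun x => lam x * ρ x) =ᶠ[𝓝 p]
      fun y => lam y • fderiv ℝ ρ y + ρ y • fderiv ℝ lam y := by
    filter_upwards [hlam.eventually_differentiableAt one_le_two,
      hρ.eventually_differentiableAt one_le_two] with y hlamy hρy using fderiv_mul hlamy hρy
  have hl := hlam.differentiableAt two_ne_zero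
  have hr := hρ.differentiableAt two_ne_zero
  have hl' := hlam.differentiableAt_fderiv le_rfl
  have hr' := hρ.differentiableAt_fderiv le_rfl
  have hD2 : fderiv ℝ (fderiv ℝ (fun x => lam x * ρ x)) p = lam p • fderiv ℝ (fderiv ℝ ρ) p := by
    rw [hD.fderiv_eq, fderiv_fun_add (f := fun y => lam y • fderiv ℝ ρ y)
      (g := fun y => ρ y • fderiv ℝ lam y) (hl.smul hr') (hr.smul hl'), fderiv_fun_smul hl hr',
      fderiv_fun_smul hr hl', hρp, hdρp]
    ext w u
    simp
  simp only [leviForm_eq_fderiv_fderiv, hD2, smul_apply, smul_eq_mul]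
  ring

theorem AnalyticAt.fderiv_real_apply {γ : ℂ → (Fin n → ℂ)} {w : ℂ} (hγ : AnalyticAt ℂ γ w)
    (u : ℂ) : fderiv ℝ γ w u = u • deriv γ w := by
  rw [hγ.differentiableAt.fderiv_restrictScalars ℝ]
  simp

theorem leviForm_eq_zero_of_holTangentAt {Z : Set (Fin n → ℂ)} {ρ : (Fin n → ℂ) → ℝ}
    {p v : Fin n → ℂ} (hρ : ContDiffAt ℝ 2 ρ p) (hρZ : ∀ z ∈ Z, ρ z = 0)
    (hdρ : fderiv ℝ ρ p = 0) (hv : HolTangentAt Z p v) : leviForm ρ p v = 0 := by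
  obtain ⟨γ, rfl, hγZ, hγ, rfl⟩ := hv
  have key := fderiv_fderiv_apply_eq_zero_of_comp_eventuallyEq_zero hρ
    (hγ.contDiffAt.restrict_scalars ℝ) hdρ (hγZ.mono fun w hw => hρZ _ hw)
  rw [leviForm_eq_fderiv_fderiv, ← hγ.fderiv_real_apply, ← one_smul ℂ (deriv γ 0),
    ← hγ.fderiv_real_apply, key, key]
  simp

theorem ContDiffAt.continuousAt_leviForm {φ : (Fin n → ℂ) → ℝ} {z : Fin n → ℂ}
    (hφ : ContDiffAt ℝ 2 φ z) (v : Fin n → ℂ) :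
    ContinuousAt (fun x : (Fin n → ℂ) × (Fin n → ℂ) => leviForm φ x.1 x.2) (z, v) := by
  have hD2 : ContinuousAt (fderiv ℝ (fderiv ℝ φ)) z :=
    (hφ.fderiv_right (m := 1) le_rfl).continuousAt_fderiv one_ne_zero
  simp only [leviForm_eq_fderiv_fderiv]
  fun_prop

theorem ContDiffOn.continuousOn_sum_leviForm {Ω : Set (Fin n → ℂ)} (hΩ : IsOpen Ω) {q : ℕ}
    {φ : (Fin n → ℂ) → ℝ} (hφ : ContDiffOn ℝ 2 φ Ω) :
    ContinuousOn (fun x : (Fin n → ℂ) × (Fin q → Fin n → ℂ) => ∑ j, leviForm φ x.1 (x.2 j))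
      (Ω ×ˢ univ) :=
  continuousOn_of_forall_continuousAt fun x hx => tendsto_finsetSum _ fun j _ =>
    ((hφ.contDiffAt (hΩ.mem_nhds hx.1)).continuousAt_leviForm (x.2 j)).comp_of_eq
      (f := fun y : (Fin n → ℂ) × (Fin q → Fin n → ℂ) => (y.1, y.2 j)) (by fun_prop) rfl

end LeviForm

section HermitianMetric

variable {n : ℕ} {g : (Fin n → ℂ) → (Fin n → ℂ) → (Fin n → ℂ) → ℂ} {Ω : Set (Fin n → ℂ)}

theorem IsHermitianMetricOn.re_apply_real_smul (hg : IsHermitianMetricOn g Ω) {z : Fin n → ℂ}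
    (hz : z ∈ Ω) (r : ℝ) (v : Fin n → ℂ) :
    (g z (r • v) (r • v)).re = r ^ 2 * (g z v v).re := by
  have hlin := fun w => hg.2.1 z hz w
  rw [← Complex.coe_smul, (hlin _).map_smul, hg.2.2.1 z hz, (hlin _).map_smul]
  simp [Complex.mul_re]
  ring

theorem IsHermitianMetricOn.exists_pos_mul_sq_norm_le (hg : IsHermitianMetricOn g Ω)
    {K : Set (Fin n → ℂ)} (hK : IsCompact K) (hKΩ : K ⊆ Ω) :
    ∃ δ : ℝ, 0 < δ ∧ ∀ z ∈ K, ∀ v, δ * ‖v‖ ^ 2 ≤ (g z v v).re := by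
  have hcont : ContinuousOn (fun x : (Fin n → ℂ) × (Fin n → ℂ) => (g x.1 x.2 x.2).re)
      (K ×ˢ sphere 0 1) :=
    Complex.continuous_re.comp_continuousOn <| hg.1.comp
      (f := fun x : (Fin n → ℂ) × (Fin n → ℂ) => (x.1, x.2, x.2)) (by fun_prop)
      fun x hx => ⟨hKΩ hx.1, trivial⟩
  obtain ⟨δ, hδ, hmin⟩ := (hK.prod (isCompact_sphere 0 1)).exists_forall_le' hcont
    fun x hx => hg.2.2.2 x.1 (hKΩ hx.1) x.2 (ne_zero_of_mem_unit_sphere ⟨x.2, hx.2⟩)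
  refine ⟨δ, hδ, fun z hz v => ?_⟩
  rcases eq_or_ne v 0 with rfl | hv
  · simp [(hg.2.1 z (hKΩ hz) 0).map_zero]
  have hv' : ‖v‖ ≠ 0 := norm_ne_zero_iff.mpr hv
  have hu : ‖v‖⁻¹ • v ∈ sphere (0 : Fin n → ℂ) 1 := by simp [norm_smul, hv']
  calc δ * ‖v‖ ^ 2 ≤ ‖v‖ ^ 2 * (g z (‖v‖⁻¹ • v) (‖v‖⁻¹ • v)).re := by
        rw [mul_comm]; gcongr; exact hmin (z, _) ⟨hz, hu⟩
    _ = (g z v v).re := by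
        rw [← hg.re_apply_real_smul (hKΩ hz), smul_smul, mul_inv_cancel₀ hv', one_smul]

def orthFrames (g : (Fin n → ℂ) → (Fin n → ℂ) → (Fin n → ℂ) → ℂ) (q : ℕ) (K : Set (Fin n → ℂ)) :
    Set ((Fin n → ℂ) × (Fin q → Fin n → ℂ)) :=
  {x | x.1 ∈ K ∧ OrthFrame g x.1 x.2}

theorem IsHermitianMetricOn.isCompact_orthFrames (hg : IsHermitianMetricOn g Ω) (q : ℕ)
    {K : Set (Fin n → ℂ)} (hK : IsCompact K) (hKΩ : K ⊆ Ω) : IsCompact (orthFrames g q K) := by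
  obtain ⟨δ, hδ, hcoer⟩ := hg.exists_pos_mul_sq_norm_le hK hKΩ
  have hbounded : orthFrames g q K ⊆ K ×ˢ closedBall 0 √(1 / δ) := by
    rintro ⟨z, e⟩ ⟨hz, he⟩
    refine ⟨hz, mem_closedBall_zero_iff.mpr
      ((pi_norm_le_iff_of_nonneg (by positivity)).mpr fun i => Real.le_sqrt_of_sq_le ?_)⟩
    rw [le_div_iff₀' hδ]
    simpa [he i i] using hcoer z hz (e i)
  let gram : (Fin n → ℂ) × (Fin q → Fin n → ℂ) → Fin q × Fin q → ℂ :=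
    fun x ij => g x.1 (x.2 ij.1) (x.2 ij.2)
  have hgram : ContinuousOn gram (K ×ˢ univ) :=
    continuousOn_pi.mpr fun ij => hg.1.comp
      (f := fun x : (Fin n → ℂ) × (Fin q → Fin n → ℂ) => (x.1, x.2 ij.1, x.2 ij.2))
      (by fun_prop) fun x hx => ⟨hKΩ hx.1, trivial⟩
  have hclosed : IsClosed (orthFrames g q K) := by
    convert hgram.preimage_isClosed_of_isClosed (hK.isClosed.prod isClosed_univ)
      (isClosed_singleton (x := fun ij : Fin q × Fin q => if ij.1 = ij.2 then (1 : ℂ) else 0))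
    ext x
    simp [orthFrames, OrthFrame, gram, funext_iff]
  exact (hK.prod (isCompact_closedBall _ _)).of_isClosed_subset hclosed hbounded

/-- The frames over a closed ball around `p` on which `F ≤ 0` form a compact set whose base
points avoid `p`. -/
theorem IsHermitianMetricOn.eventually_forall_orthFrame_pos (hg : IsHermitianMetricOn g Ω)
    (hΩ : IsOpen Ω) {q : ℕ} {F : (Fin n → ℂ) × (Fin q → Fin n → ℂ) → ℝ}
    (hF : ContinuousOn F (Ω ×ˢ univ)) {p : Fin n → ℂ} (hp : p ∈ Ω)
    (hpos : ∀ e, OrthFrame g p e → 0 < F (p, e)) :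
    ∀ᶠ z in 𝓝 p, ∀ e, OrthFrame g z e → 0 < F (z, e) := by
  obtain ⟨ε, hε, hεΩ⟩ := nhds_basis_closedBall.mem_iff.mp (hΩ.mem_nhds hp)
  have hC := hg.isCompact_orthFrames q (isCompact_closedBall p ε) hεΩ
  have hbad : IsCompact (orthFrames g q (closedBall p ε) ∩ F ⁻¹' Iic 0) :=
    hC.of_isClosed_subset ((hF.mono fun x hx => ⟨hεΩ hx.1, trivial⟩).preimage_isClosed_of_isClosed
      hC.isClosed isClosed_Iic) inter_subset_left
  have hp_good : p ∉ Prod.fst '' (orthFrames g q (closedBall p ε) ∩ F ⁻¹' Iic 0) := by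
    rintro ⟨⟨z, e⟩, ⟨⟨-, he⟩, hle⟩, rfl⟩
    exact (hpos e he).not_ge hle
  filter_upwards [closedBall_mem_nhds p hε,
    (hbad.image continuous_fst).isClosed.isOpen_compl.mem_nhds hp_good] with z hzε hz e he
  by_contra! hle
  exact hz ⟨(z, e), ⟨⟨hzε, he⟩, hle⟩, rfl⟩

theorem IsHermitianMetricOn.exists_pos_eventually_forall_orthFrame_add_mul_pos
    (hg : IsHermitianMetricOn g Ω) (hΩ : IsOpen Ω) {q : ℕ} {α ρ : (Fin n → ℂ) → ℝ}
    (hα : ContDiffOn ℝ 2 α Ω) (hρ : ContDiffOn ℝ 2 ρ Ω) {p : Fin n → ℂ} (hp : p ∈ Ω)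
    (hρp : ∀ v, 0 ≤ leviForm ρ p v)
    (hαp : ∀ e : Fin q → Fin n → ℂ, OrthFrame g p e → ∑ j, leviForm ρ p (e j) = 0 →
      0 < ∑ j, leviForm α p (e j)) :
    ∃ c : ℝ, 0 < c ∧ ∀ᶠ z in 𝓝 p, ∀ e : Fin q → Fin n → ℂ, OrthFrame g z e →
      0 < ∑ j, leviForm α z (e j) + c * ∑ j, leviForm ρ z (e j) := by
  have hA := hα.continuousOn_sum_leviForm hΩ (q := q)
  have hR := hρ.continuousOn_sum_leviForm hΩ (q := q)
  have hpΩ : orthFrames g q {p} ⊆ Ω ×ˢ univ := fun x hx => ⟨hx.1 ▸ hp, trivial⟩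
  have hR0 : ∀ e : Fin q → Fin n → ℂ, 0 ≤ ∑ j, leviForm ρ p (e j) := fun e =>
    Finset.sum_nonneg fun j _ => hρp (e j)
  obtain ⟨c, hc⟩ := (hg.isCompact_orthFrames q isCompact_singleton (singleton_subset_iff.mpr hp)
    ).exists_forall_pos_add_mul (hA.mono hpΩ) (hR.mono hpΩ)
    (by rintro ⟨_, e⟩ ⟨rfl, -⟩; exact hR0 e) (by rintro ⟨_, e⟩ ⟨rfl, he⟩; exact hαp e he)
  refine ⟨max c 1, by positivity, hg.eventually_forall_orthFrame_pos hΩ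
    (F := fun x => ∑ j, leviForm α x.1 (x.2 j) + max c 1 * ∑ j, leviForm ρ x.1 (x.2 j))
    (hA.add (continuousOn_const.mul hR)) hp fun e he => ?_⟩
  have := mul_le_mul_of_nonneg_right (le_max_left c 1) (hR0 e)
  have := hc (p, e) ⟨rfl, he⟩
  dsimp only at *
  linarith

theorem IsHermitianMetricOn.exists_isOpen_superset_stronglyQConvexOn
    (hg : IsHermitianMetricOn g Ω) (hΩ : IsOpen Ω) {q : ℕ} {φ : (Fin n → ℂ) → ℝ}
    (hφ : ContDiffOn ℝ 2 φ Ω) {Z : Set (Fin n → ℂ)} (hZΩ : Z ⊆ Ω)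
    (hφZ : StronglyQConvexOn g q φ Z) :
    ∃ W, IsOpen W ∧ Z ⊆ W ∧ W ⊆ Ω ∧ StronglyQConvexOn g q φ W := by
  refine ⟨interior {z | z ∈ Ω ∧ ∀ e, OrthFrame g z e → 0 < ∑ j, leviForm φ z (e j)},
    isOpen_interior, fun p hp => ?_, interior_subset.trans fun z hz => hz.1,
    fun z hz => (interior_subset hz).2⟩
  exact mem_interior_iff_mem_nhds.mpr <| (hΩ.eventually_mem (hZΩ hp)).and
    (hg.eventually_forall_orthFrame_pos hΩ (hφ.continuousOn_sum_leviForm hΩ) (hZΩ hp) (hφZ p hp))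

end HermitianMetric

theorem stmt18_general {n : ℕ} (q k : ℕ)
    (Ω : Set (Fin n → ℂ)) (hΩ : IsOpen Ω)
    (g : (Fin n → ℂ) → (Fin n → ℂ) → (Fin n → ℂ) → ℂ) (hg : IsHermitianMetricOn g Ω)
    (Z : Set (Fin n → ℂ)) (hZ : IsClosedSubmanifoldOf k Ω Z)
    (α : (Fin n → ℂ) → ℝ) (hα : ContDiffOn ℝ (⊤ : ℕ∞) α Ω)
    (hαZ : ∀ p ∈ Z, ∀ e : Fin q → (Fin n → ℂ), (∀ j, HolTangentAt Z p (e j)) →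
      OrthFrame g p e → 0 < ∑ j, leviForm α p (e j))
    (ρ : (Fin n → ℂ) → ℝ) (hρ : ContDiffOn ℝ (⊤ : ℕ∞) ρ Ω)
    (hρ0 : ∀ p ∈ Z, ρ p = 0) (hdρ0 : ∀ p ∈ Z, fderiv ℝ ρ p = 0)
    (hρpos : ∀ p ∈ Z, ∀ v : Fin n → ℂ, ¬ HolTangentAt Z p v → 0 < leviForm ρ p v) :
    ∃ lam₀ : (Fin n → ℂ) → ℝ, ContinuousOn lam₀ Z ∧ (∀ p ∈ Z, 0 < lam₀ p) ∧
      ∀ lam : (Fin n → ℂ) → ℝ, ContDiffOn ℝ (⊤ : ℕ∞) lam Ω →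
        (∀ p ∈ Z, lam₀ p < lam p) →
        ∃ W : Set (Fin n → ℂ), IsOpen W ∧ Z ⊆ W ∧ W ⊆ Ω ∧
          StronglyQConvexOn g q (fun x => α x + lam x * ρ x) W := by
  have hZΩ : Z ⊆ Ω := hZ.1
  have h2 : (2 : WithTop ℕ∞) ≤ ((⊤ : ℕ∞) : WithTop ℕ∞) := WithTop.coe_le_coe.mpr le_top
  have hρ_nonneg : ∀ p ∈ Z, ∀ v, 0 ≤ leviForm ρ p v := fun p hp v => by
    by_cases hv : HolTangentAt Z p v
    · exact (leviForm_eq_zero_of_holTangentAt ((hρ.of_le h2).contDiffAt (hΩ.mem_nhds (hZΩ hp)))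
        hρ0 (hdρ0 p hp) hv).ge
    · exact (hρpos p hp v hv).le
  let admissible : (Fin n → ℂ) → Set ℝ := fun p => {c | 0 < c ∧
    ∀ e : Fin q → Fin n → ℂ, OrthFrame g p e →
      0 < ∑ j, leviForm α p (e j) + c * ∑ j, leviForm ρ p (e j)}
  have hadm_upper : ∀ p ∈ Z, IsUpperSet (admissible p) := fun p hp c c' hcc' ⟨hc, hce⟩ =>
    ⟨hc.trans_le hcc', fun e he => (hce e he).trans_le <| add_le_add_right
      (mul_le_mul_of_nonneg_right hcc' (Finset.sum_nonneg fun j _ => hρ_nonneg p hp (e j))) _⟩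
  have htangent : ∀ p ∈ Z, ∀ e : Fin q → Fin n → ℂ, ∑ j, leviForm ρ p (e j) = 0 →
      ∀ j, HolTangentAt Z p (e j) := fun p hp e hR j => by
    by_contra hj
    exact (hρpos p hp (e j) hj).ne' ((Finset.sum_eq_zero_iff_of_nonneg
      fun i _ => hρ_nonneg p hp (e i)).mp hR j (Finset.mem_univ j))
  have hadm_local : ∀ p ∈ Z, ∃ c, ∀ᶠ y in 𝓝 p, c ∈ admissible y := fun p hp => by
    obtain ⟨c, hc, hev⟩ := hg.exists_pos_eventually_forall_orthFrame_add_mul_pos hΩ (hα.of_le h2)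
      (hρ.of_le h2) (hZΩ hp) (hρ_nonneg p hp) fun e he hR => hαZ p hp e (htangent p hp e hR) he
    exact ⟨c, hev.mono fun y hy => ⟨hc, hy⟩⟩
  obtain ⟨lam₀, hlam₀, hlam₀_adm⟩ := exists_continuousOn_forall_mem_convex_of_local_const
    (fun p hp => (hadm_upper p hp).ordConnected.convex) hadm_local
  refine ⟨lam₀, hlam₀, fun p hp => (hlam₀_adm p hp).1, fun lam hlam hlt => ?_⟩
  refine hg.exists_isOpen_superset_stronglyQConvexOn hΩ
    ((hα.of_le h2).add ((hlam.of_le h2).mul (hρ.of_le h2))) hZΩ fun p hp e he => ?_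
  have hsmooth : ∀ {φ : (Fin n → ℂ) → ℝ}, ContDiffOn ℝ (⊤ : ℕ∞) φ Ω → ContDiffAt ℝ 2 φ p :=
    fun hφ => (hφ.of_le h2).contDiffAt (hΩ.mem_nhds (hZΩ hp))
  simp only [leviForm_add (hsmooth hα) ((hsmooth hlam).mul (hsmooth hρ)),
    leviForm_mul_of_fderiv_eq_zero (hsmooth hlam) (hsmooth hρ) (hρ0 p hp) (hdρ0 p hp),
    Finset.sum_add_distrib, ← Finset.mul_sum]
  exact (hadm_upper p hp (hlt p hp).le (hlam₀_adm p hp)).2 e he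

/-- **Lemma (extension of strong `q`-convexity across a submanifold).**
Let `(Ω, g)` be a Hermitian complex manifold (an open subset of `ℂⁿ` with Hermitian
metric `g`), `Z ⊆ Ω` a properly embedded complex submanifold and `α` a real-valued C^∞
function on `Ω` whose restriction to `Z` is strongly `q`-convex w.r.t. `g|_Z`.  Suppose
`ρ ∈ C^∞(Ω)` vanishes to second order along `Z` and `L(ρ)(v,v) > 0` for each tangent
vector `v` of `Ω` at a point of `Z` not tangent to `Z`.  Then there is a positive
continuous `λ₀` on `Z` such that for every `λ ∈ C^∞(Ω)` with `λ > λ₀` on `Z`, the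
function `β = α + λ·ρ` is strongly `q`-convex w.r.t. `g` on some neighborhood of `Z`. -/
theorem stmt18 {n : ℕ} (q k : ℕ) (hq : 0 < q)
    (Ω : Set (Fin n → ℂ)) (hΩ : IsOpen Ω)
    (g : (Fin n → ℂ) → (Fin n → ℂ) → (Fin n → ℂ) → ℂ) (hg : IsHermitianMetricOn g Ω)
    (Z : Set (Fin n → ℂ)) (hZ : IsClosedSubmanifoldOf k Ω Z)
    (α : (Fin n → ℂ) → ℝ) (hα : ContDiffOn ℝ (⊤ : ℕ∞) α Ω)
    (hαZ : ∀ p ∈ Z, ∀ e : Fin q → (Fin n → ℂ), (∀ j, HolTangentAt Z p (e j)) →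
      OrthFrame g p e → 0 < ∑ j, leviForm α p (e j))
    (ρ : (Fin n → ℂ) → ℝ) (hρ : ContDiffOn ℝ (⊤ : ℕ∞) ρ Ω)
    (hρ0 : ∀ p ∈ Z, ρ p = 0) (hdρ0 : ∀ p ∈ Z, fderiv ℝ ρ p = 0)
    (hρpos : ∀ p ∈ Z, ∀ v : Fin n → ℂ, ¬ HolTangentAt Z p v → 0 < leviForm ρ p v) :
    ∃ lam₀ : (Fin n → ℂ) → ℝ, ContinuousOn lam₀ Z ∧ (∀ p ∈ Z, 0 < lam₀ p) ∧
      ∀ lam : (Fin n → ℂ) → ℝ, ContDiffOn ℝ (⊤ : ℕ∞) lam Ω →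
        (∀ p ∈ Z, lam₀ p < lam p) →
        ∃ W : Set (Fin n → ℂ), IsOpen W ∧ Z ⊆ W ∧ W ⊆ Ω ∧
          StronglyQConvexOn g q (fun x => α x + lam x * ρ x) W :=
  stmt18_general q k Ω hΩ g hg Z hZ α hα hαZ ρ hρ hρ0 hdρ0 hρpos
end
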